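/- arXiv:1401.6509 — 11 statements merged into one kernel-verified Lean document; each statement's English description precedes it below -/
import Mathlib

section
/- Let A, B be closed subsets of a Euclidean space, L := aff(A ∪ B), and let (xₙ) be a Douglas–Rachford sequence, i.e., x_{n+1} ∈ T(xₙ) for all n, where T = (1/2)(Id + R_B R_A). Set yₙ := P_L xₙ. Then (yₙ) is also a Douglas–Rachford sequence (y_{n+1} ∈ T(yₙ)) and xₙ − yₙ = x₀ − y₀ for all n ∈ ℕ. -/
open Metric Filter
open scoped Topology

variable {X : Type*} [NormedAddCommGroup X] [InnerProductSpace ℝ X] [FiniteDimensional ℝ X]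

/-- Set-valued metric projection onto `C`. -/
def projSet (C : Set X) (x : X) : Set X := {a | a ∈ C ∧ ∀ c ∈ C, ‖x - a‖ ≤ ‖x - c‖}

/-- Set-valued reflector `R_C = 2 P_C - Id`. -/
def reflSet (C : Set X) (x : X) : Set X := {z | ∃ a ∈ projSet C x, z = (2:ℝ) • a - x}

/-- Set-valued Douglas–Rachford operator `T(x) = {P_B(2a-x)+x-a : a ∈ P_A x}`. -/
def DRop (A B : Set X) (x : X) : Set X :=
  {y | ∃ a ∈ projSet A x, ∃ b ∈ projSet B ((2:ℝ) • a - x), y = b + x - a}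

/-- Proximal normal cone `N^P_C(x) = cone (P_C⁻¹ x - x)`. -/
def proxNormalCone (C : Set X) (x : X) : Set X :=
  {u | ∃ t : ℝ, 0 ≤ t ∧ ∃ z : X, x ∈ projSet C z ∧ u = t • (z - x)}

/-- Mordukhovich (limiting) normal cone. -/
def limNormalCone (C : Set X) (w : X) : Set X :=
  {u | ∃ xs us : ℕ → X, (∀ n, xs n ∈ C) ∧ (∀ n, us n ∈ proxNormalCone C (xs n)) ∧
      Tendsto xs atTop (𝓝 w) ∧ Tendsto us atTop (𝓝 u)}

/-- `(ε,δ)`-regularity of `C` at `w`. -/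
def regAt (C : Set X) (w : X) (ε δ : ℝ) : Prop :=
  ∀ x ∈ C ∩ closedBall w δ, ∀ z ∈ C ∩ closedBall w δ, ∀ u ∈ proxNormalCone C x,
    (inner ℝ u (z - x) : ℝ) ≤ ε * ‖u‖ * ‖z - x‖

/-- Superregularity of `C` at `w`. -/
def superregAt (C : Set X) (w : X) : Prop := ∀ ε > 0, ∃ δ > 0, regAt C w ε δ

/-- The quantity `θ̄(N₁,N₂) = sup {⟨u,v⟩ : u ∈ N₁ ∩ 𝔹, v ∈ (-N₂) ∩ 𝔹}`. -/
noncomputable def thetaBar (N₁ N₂ : Set X) : ℝ :=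
  sSup {r : ℝ | ∃ u ∈ N₁, ∃ v ∈ -N₂, ‖u‖ ≤ 1 ∧ ‖v‖ ≤ 1 ∧ r = (inner ℝ u v : ℝ)}

/-! A metric projection onto a subset of an affine subspace `L` does not change when the point
is moved orthogonally to `L`, by Pythagoras. So a Douglas–Rachford step from `y + u`, with
`y ∈ L` and `u ⊥ L`, is a step from `y` translated by `u`; since steps from `L` stay in `L`,
`P_L` strips off exactly `u`, and the offset `x - P_L x` is carried along the sequence. -/

section

variable {E : Type*} [NormedAddCommGroup E]

theorem projSet_eq_of_forall_norm_sub_sq {C : Set E} {x y : E} (k : ℝ)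
    (h : ∀ c ∈ C, ‖x - c‖ ^ 2 = ‖y - c‖ ^ 2 + k) : projSet C x = projSet C y := by
  ext a
  refine and_congr_right fun ha => forall₂_congr fun c hc => ?_
  rw [← sq_le_sq₀ (norm_nonneg _) (norm_nonneg _), ← sq_le_sq₀ (norm_nonneg _) (norm_nonneg _),
    h a ha, h c hc, add_le_add_iff_right]

variable [InnerProductSpace ℝ E]

theorem norm_add_sub_sq_of_mem_orthogonal {L : AffineSubspace ℝ E} {y c u : E}
    (hy : y ∈ L) (hc : c ∈ L) (hu : u ∈ L.directionᗮ) :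
    ‖y + u - c‖ ^ 2 = ‖y - c‖ ^ 2 + ‖u‖ ^ 2 := by
  have hyc : y - c ∈ L.direction := AffineSubspace.vsub_mem_direction hy hc
  rw [add_sub_right_comm, norm_add_sq_real, Submodule.inner_right_of_mem_orthogonal hyc hu,
    mul_zero, add_zero]

theorem projSet_add_of_mem_orthogonal {C : Set E} {L : AffineSubspace ℝ E} {y u : E}
    (hCL : C ⊆ L) (hy : y ∈ L) (hu : u ∈ L.directionᗮ) :
    projSet C (y + u) = projSet C y :=
  projSet_eq_of_forall_norm_sub_sq (‖u‖ ^ 2) fun _ hc =>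
    norm_add_sub_sq_of_mem_orthogonal hy (hCL hc) hu

theorem mem_projSet_affineSubspace_iff {L : AffineSubspace ℝ E} {x q : E} :
    q ∈ projSet (L : Set E) x ↔ q ∈ L ∧ x - q ∈ L.directionᗮ := by
  refine and_congr_right fun hq => ?_
  have hdir : ∀ w ∈ L.direction, q + w ∈ L := fun w hw => by
    simpa [vadd_eq_add, add_comm] using AffineSubspace.vadd_mem_of_mem_direction hw hq
  constructor
  · intro hmin
    have hinf : ‖x - q - 0‖ = ⨅ w : (L.direction : Set E), ‖x - q - w‖ := by
      refine le_antisymm (le_ciInf fun w => ?_) <|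
        ciInf_le ⟨0, Set.forall_mem_range.2 fun _ => norm_nonneg _⟩
          (⟨0, L.direction.zero_mem⟩ : (L.direction : Set E))
      simpa [sub_sub] using hmin _ (hdir w w.2)
    exact (Submodule.mem_orthogonal' _ _).2 <| by
      simpa using (L.direction.norm_eq_iInf_iff_real_inner_eq_zero L.direction.zero_mem).1 hinf
  · intro hxq c hc
    have h := norm_add_sub_sq_of_mem_orthogonal hq hc hxq
    rw [add_sub_cancel] at h
    exact (sq_le_sq₀ (norm_nonneg _) (norm_nonneg _)).1 (by nlinarith [norm_nonneg (q - c)])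

theorem mem_of_mem_DRop {A B : Set E} {L : AffineSubspace ℝ E} (hAL : A ⊆ L) (hBL : B ⊆ L)
    {y z : E} (hy : y ∈ L) (hz : z ∈ DRop A B y) : z ∈ L := by
  obtain ⟨a, ha, b, hb, rfl⟩ := hz
  have h := AffineSubspace.vadd_mem_of_mem_direction
    (AffineSubspace.vsub_mem_direction (hBL hb.1) (hAL ha.1)) hy
  rwa [vsub_eq_sub, vadd_eq_add, sub_add_eq_add_sub] at h

theorem mem_DRop_add_iff {A B : Set E} {L : AffineSubspace ℝ E} (hAL : A ⊆ L) (hBL : B ⊆ L)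
    {y u z : E} (hy : y ∈ L) (hu : u ∈ L.directionᗮ) :
    z ∈ DRop A B (y + u) ↔ z - u ∈ DRop A B y := by
  simp only [DRop, Set.mem_ofPred_eq, projSet_add_of_mem_orthogonal hAL hy hu]
  refine exists_congr fun a => and_congr_right fun ha => ?_
  have hrefl : (2 : ℝ) • a - y ∈ L := by
    have h := AffineSubspace.vadd_mem_of_mem_direction
      (AffineSubspace.vsub_mem_direction (hAL ha.1) hy) (hAL ha.1)
    rwa [vsub_eq_sub, vadd_eq_add, sub_add_eq_add_sub, ← two_smul ℝ] at h
  rw [← sub_sub, sub_eq_add_neg ((2 : ℝ) • a - y),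
    projSet_add_of_mem_orthogonal hBL hrefl (neg_mem hu)]
  refine exists_congr fun b => and_congr_right fun _ => ?_
  rw [sub_eq_iff_eq_add, show b + (y + u) - a = b + y - a + u by abel]

end

theorem DR_affine_reduction_sequence_general
    (A B : Set X)
    (PL : X → X)
    (hPL : ∀ x, projSet ((affineSpan ℝ (A ∪ B) : AffineSubspace ℝ X) : Set X) x = {PL x})
    (xs : ℕ → X) (hxs : ∀ n, xs (n + 1) ∈ DRop A B (xs n)) :
    (∀ n, PL (xs (n + 1)) ∈ DRop A B (PL (xs n))) ∧
      ∀ n, xs n - PL (xs n) = xs 0 - PL (xs 0) := by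
  set L : AffineSubspace ℝ X := affineSpan ℝ (A ∪ B)
  have hAL : A ⊆ L := Set.subset_union_left.trans (subset_affineSpan ℝ _)
  have hBL : B ⊆ L := Set.subset_union_right.trans (subset_affineSpan ℝ _)
  have hPL_iff : ∀ x q, PL x = q ↔ q ∈ L ∧ x - q ∈ L.directionᗮ := fun x q => by
    rw [← mem_projSet_affineSubspace_iff, hPL, Set.mem_singleton_iff, eq_comm]
  have step : ∀ n, PL (xs (n + 1)) ∈ DRop A B (PL (xs n)) ∧
      xs (n + 1) - PL (xs (n + 1)) = xs n - PL (xs n) := fun n => by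
    obtain ⟨hyL, hu⟩ := (hPL_iff (xs n) _).1 rfl
    have hz : xs (n + 1) - (xs n - PL (xs n)) ∈ DRop A B (PL (xs n)) :=
      (mem_DRop_add_iff hAL hBL hyL hu).1 (by rw [add_sub_cancel]; exact hxs n)
    have hPz : PL (xs (n + 1)) = xs (n + 1) - (xs n - PL (xs n)) :=
      (hPL_iff _ _).2 ⟨mem_of_mem_DRop hAL hBL hyL hz, by rwa [sub_sub_cancel]⟩
    exact ⟨hPz ▸ hz, by rw [hPz, sub_sub_cancel]⟩
  refine ⟨fun n => (step n).1, fun n => ?_⟩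
  induction n with
  | zero => rfl
  | succ k ih => rw [(step k).2, ih]

theorem DR_affine_reduction_sequence
    (A B : Set X) (hA : IsClosed A) (hB : IsClosed B)
    (hAne : A.Nonempty) (hBne : B.Nonempty)
    (PL : X → X)
    (hPL : ∀ x, projSet ((affineSpan ℝ (A ∪ B) : AffineSubspace ℝ X) : Set X) x = {PL x})
    (xs : ℕ → X) (hxs : ∀ n, xs (n + 1) ∈ DRop A B (xs n)) :
    (∀ n, PL (xs (n + 1)) ∈ DRop A B (PL (xs n))) ∧
      ∀ n, xs n - PL (xs n) = xs 0 - PL (xs 0) :=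
  DR_affine_reduction_sequence_general A B PL hPL xs hxs
end

section
/- Let A, B be closed subsets of a Euclidean space, L := aff(A ∪ B), and let (xₙ) be a Douglas–Rachford sequence with shadows yₙ := P_L xₙ. If (yₙ) converges to a point ȳ ∈ A ∩ B, then (xₙ) converges to x̄ := ȳ + (x₀ − y₀), and moreover P_A x̄ = P_B x̄ = P_L x̄ = {ȳ}; in particular the projections of x̄ onto A and onto B are singletons equal to ȳ. -/
open Metric Filter
open scoped Topology

variable {X : Type*} [NormedAddCommGroup X] [InnerProductSpace ℝ X] [FiniteDimensional ℝ X]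

/-!
A Douglas–Rachford step moves `x` by `b - a` with `a ∈ A`, `b ∈ B`, a vector in the direction of
`L = aff (A ∪ B)`. The projector onto an affine subspace commutes with translations along its
direction, so the displacement `xₙ - P_L xₙ` never changes and `xₙ = yₙ + (x₀ - y₀) → x̄`.
For the same reason `P_L x̄ = ȳ`; as `A` and `B` lie in `L` and contain `ȳ`, the unique nearest
point of `L` is also the unique nearest point of `A` and of `B`.
-/

section

variable {E : Type*} [NormedAddCommGroup E]

theorem projSet_eq_singleton_of_subset {C D : Set E} {y z : E} (hCD : C ⊆ D) (hy : y ∈ C)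
    (hD : projSet D z = {y}) : projSet C z = {y} := by
  have hyD : y ∈ projSet D z := hD ▸ rfl
  ext a
  refine ⟨fun ha => ?_, ?_⟩
  · rw [← hD]
    exact ⟨hCD ha.1, fun d hd => (ha.2 y hy).trans (hyD.2 d hd)⟩
  · rintro rfl
    exact ⟨hy, fun c hc => hyD.2 c (hCD hc)⟩

theorem sub_mem_direction_of_mem_DRop [InnerProductSpace ℝ E] {A B : Set E} {x y : E}
    (h : y ∈ DRop A B x) : y - x ∈ (affineSpan ℝ (A ∪ B)).direction := by
  obtain ⟨a, ha, b, hb, rfl⟩ := h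
  convert AffineSubspace.vsub_mem_direction (subset_affineSpan ℝ (A ∪ B) (Or.inr hb.1))
    (subset_affineSpan ℝ (A ∪ B) (Or.inl ha.1)) using 1
  rw [vsub_eq_sub]
  abel

variable {k : Type*} [Ring k] [Module k E] {L : AffineSubspace k E} {P : E → E}

theorem proj_add_of_mem_direction (hP : ∀ x, projSet (L : Set E) x = {P x}) {v : E}
    (hv : v ∈ L.direction) (x : E) : P (x + v) = P x + v := by
  have hPx : P x ∈ projSet (L : Set E) x := (hP x).symm ▸ rfl
  have hmem : P x + v ∈ projSet (L : Set E) (x + v) := by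
    refine ⟨add_comm v (P x) ▸ AffineSubspace.vadd_mem_of_mem_direction hv hPx.1,
      fun c hc => ?_⟩
    have hcv : c - v ∈ L := by
      simpa [vadd_eq_add, sub_eq_neg_add] using
        AffineSubspace.vadd_mem_of_mem_direction (neg_mem hv) hc
    calc ‖x + v - (P x + v)‖ = ‖x - P x‖ := by rw [add_sub_add_right_eq_sub]
      _ ≤ ‖x - (c - v)‖ := hPx.2 _ hcv
      _ = ‖x + v - c‖ := by rw [sub_sub_eq_add_sub]
  rw [hP] at hmem
  exact hmem.symm

theorem sub_proj_eq_of_sub_mem_direction (hP : ∀ x, projSet (L : Set E) x = {P x}) {x y : E}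
    (h : y - x ∈ L.direction) : y - P y = x - P x := by
  calc y - P y = x + (y - x) - P (x + (y - x)) := by rw [add_sub_cancel]
    _ = x - P x := by rw [proj_add_of_mem_direction hP h]; abel

theorem proj_add_sub_proj (hP : ∀ x, projSet (L : Set E) x = {P x}) {y : E} (hy : y ∈ L)
    (x : E) : P (y + (x - P x)) = y := by
  have hv : y - P x ∈ L.direction :=
    AffineSubspace.vsub_mem_direction hy ((hP x).symm ▸ rfl : P x ∈ projSet (L : Set E) x).1
  calc P (y + (x - P x)) = P (x + (y - P x)) := by congr 1; abel
    _ = y := by rw [proj_add_of_mem_direction hP hv]; abel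

end

theorem DR_affine_reduction_convergence_general
    (A B : Set X)
    (PL : X → X)
    (hPL : ∀ x, projSet ((affineSpan ℝ (A ∪ B) : AffineSubspace ℝ X) : Set X) x = {PL x})
    (xs : ℕ → X) (hxs : ∀ n, xs (n + 1) ∈ DRop A B (xs n))
    (ybar : X) (hybar : ybar ∈ A ∩ B)
    (hconv : Tendsto (fun n => PL (xs n)) atTop (𝓝 ybar)) :
    Tendsto xs atTop (𝓝 (ybar + (xs 0 - PL (xs 0)))) ∧
      projSet A (ybar + (xs 0 - PL (xs 0))) = {ybar} ∧
      projSet B (ybar + (xs 0 - PL (xs 0))) = {ybar} ∧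
      PL (ybar + (xs 0 - PL (xs 0))) = ybar := by
  set L := affineSpan ℝ (A ∪ B)
  have hAL : A ⊆ L := Set.subset_union_left.trans (subset_affineSpan ℝ _)
  have hBL : B ⊆ L := Set.subset_union_right.trans (subset_affineSpan ℝ _)
  have hinvariant : ∀ n, xs n - PL (xs n) = xs 0 - PL (xs 0) := by
    intro n
    induction n with
    | zero => rfl
    | succ n ih =>
      rw [sub_proj_eq_of_sub_mem_direction hPL (sub_mem_direction_of_mem_DRop (hxs n)), ih]
  have hfix : PL (ybar + (xs 0 - PL (xs 0))) = ybar := proj_add_sub_proj hPL (hAL hybar.1) _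
  have hprojL : projSet (L : Set X) (ybar + (xs 0 - PL (xs 0))) = {ybar} := by rw [hPL, hfix]
  refine ⟨?_, projSet_eq_singleton_of_subset hAL hybar.1 hprojL,
    projSet_eq_singleton_of_subset hBL hybar.2 hprojL, hfix⟩
  refine (hconv.add_const (xs 0 - PL (xs 0))).congr fun n => ?_
  rw [← hinvariant n, add_sub_cancel]

theorem DR_affine_reduction_convergence
    (A B : Set X) (hA : IsClosed A) (hB : IsClosed B)
    (hAne : A.Nonempty) (hBne : B.Nonempty)
    (PL : X → X)
    (hPL : ∀ x, projSet ((affineSpan ℝ (A ∪ B) : AffineSubspace ℝ X) : Set X) x = {PL x})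
    (xs : ℕ → X) (hxs : ∀ n, xs (n + 1) ∈ DRop A B (xs n))
    (ybar : X) (hybar : ybar ∈ A ∩ B)
    (hconv : Tendsto (fun n => PL (xs n)) atTop (𝓝 ybar)) :
    Tendsto xs atTop (𝓝 (ybar + (xs 0 - PL (xs 0)))) ∧
      projSet A (ybar + (xs 0 - PL (xs 0))) = {ybar} ∧
      projSet B (ybar + (xs 0 - PL (xs 0))) = {ybar} ∧
      PL (ybar + (xs 0 - PL (xs 0))) = ybar :=
  DR_affine_reduction_convergence_general A B PL hPL xs hxs ybar hybar hconv
end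

section
/- Let Φ : X ⇉ X be a set-valued operator, Ω a nonempty closed subset of X, w ∈ Ω, δ > 0 and κ ∈ [0,1). Assume that for all x in the closed ball B_δ(w), all x₊ ∈ Φ(x), and all x̄ ∈ P_Ω(x), one has ‖x₊ − x̄‖ ≤ κ‖x − x̄‖. If ‖x₀ − w‖ ≤ δ(1−κ)/2 and x_{n+1} ∈ Φ(xₙ) for all n, then (xₙ) converges to a point x̄ ∈ Ω ∩ B_δ(w) with R-linear rate: ‖xₙ − x̄‖ ≤ (‖x₀ − w‖(1+κ)/(1−κ)) κⁿ for all n ∈ ℕ. -/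
open Metric Filter
open scoped Topology

variable {X : Type*} [NormedAddCommGroup X] [InnerProductSpace ℝ X] [FiniteDimensional ℝ X]

/-!
The potential `V x = dist x w + (1 + κ) / (1 - κ) * infDist x Ω` does not increase along the
iteration as long as the iterates stay in `closedBall w δ`, while `infDist · Ω` shrinks by the
factor `κ`. Since `V (xs 0) ≤ 2 ‖xs 0 - w‖ / (1 - κ) ≤ δ`, every iterate stays in the ball, so the
steps `dist (xs n) (xs (n + 1)) ≤ (1 + κ) * infDist (xs n) Ω` are geometrically small and the
sequence converges R-linearly; its limit lies in `Ω` because `infDist (xs n) Ω → 0`.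
-/

section PseudoMetric

variable {α : Type*} [PseudoMetricSpace α] {Ω : Set α} {κ δ : ℝ} {w x y p : α}

lemma infDist_le_mul_and_dist_le_of_dist_le_mul (hp : p ∈ Ω) (hpx : dist x p = infDist x Ω)
    (hy : dist y p ≤ κ * dist x p) :
    infDist y Ω ≤ κ * infDist x Ω ∧ dist x y ≤ (1 + κ) * infDist x Ω := by
  refine ⟨hpx ▸ (infDist_le_dist_of_mem hp).trans hy, ?_⟩
  calc dist x y ≤ dist x p + dist y p := dist_triangle_right x y p
    _ ≤ (1 + κ) * infDist x Ω := by rw [← hpx]; linarith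

lemma dist_add_mul_infDist_le_of_step (hκ0 : 0 ≤ κ) (hκ1 : κ < 1)
    (hinf : infDist y Ω ≤ κ * infDist x Ω) (hmove : dist x y ≤ (1 + κ) * infDist x Ω) :
    dist y w + (1 + κ) / (1 - κ) * infDist y Ω ≤ dist x w + (1 + κ) / (1 - κ) * infDist x Ω := by
  have hc : (1 + κ) / (1 - κ) * infDist y Ω ≤ (1 + κ) / (1 - κ) * (κ * infDist x Ω) :=
    mul_le_mul_of_nonneg_left hinf (div_nonneg (by linarith) (by linarith))
  have hcoef : 1 + κ + (1 + κ) / (1 - κ) * κ = (1 + κ) / (1 - κ) := by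
    field_simp [(sub_pos.2 hκ1).ne']
    ring
  calc dist y w + (1 + κ) / (1 - κ) * infDist y Ω
      ≤ dist x y + dist x w + (1 + κ) / (1 - κ) * (κ * infDist x Ω) := by
        linarith [dist_triangle_left y w x]
    _ ≤ dist x w + (1 + κ + (1 + κ) / (1 - κ) * κ) * infDist x Ω := by linarith
    _ = dist x w + (1 + κ) / (1 - κ) * infDist x Ω := by rw [hcoef]

variable {xs : ℕ → α}

lemma mem_closedBall_and_infDist_le_pow (hw : w ∈ Ω) (hκ0 : 0 ≤ κ) (hκ1 : κ < 1)
    (hx0 : dist (xs 0) w ≤ δ * (1 - κ) / 2)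
    (hstep : ∀ n, xs n ∈ closedBall w δ → infDist (xs (n + 1)) Ω ≤ κ * infDist (xs n) Ω ∧
      dist (xs n) (xs (n + 1)) ≤ (1 + κ) * infDist (xs n) Ω) (n : ℕ) :
    xs n ∈ closedBall w δ ∧ infDist (xs n) Ω ≤ κ ^ n * dist (xs 0) w := by
  have hc : 0 ≤ (1 + κ) / (1 - κ) := div_nonneg (by linarith) (by linarith)
  have hd0 : infDist (xs 0) Ω ≤ dist (xs 0) w := infDist_le_dist_of_mem hw
  suffices h : ∀ n, dist (xs n) w + (1 + κ) / (1 - κ) * infDist (xs n) Ω ≤ δ ∧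
      infDist (xs n) Ω ≤ κ ^ n * dist (xs 0) w by
    refine ⟨mem_closedBall.2 ?_, (h n).2⟩
    nlinarith [h n, infDist_nonneg (x := xs n) (s := Ω)]
  intro n
  induction n with
  | zero =>
    refine ⟨?_, by simpa using hd0⟩
    calc dist (xs 0) w + (1 + κ) / (1 - κ) * infDist (xs 0) Ω
        ≤ dist (xs 0) w + (1 + κ) / (1 - κ) * dist (xs 0) w := by gcongr
      _ = 2 * dist (xs 0) w / (1 - κ) := by field_simp [(sub_pos.2 hκ1).ne']; ring
      _ ≤ δ := by rw [div_le_iff₀ (by linarith)]; linarith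
  | succ n ih =>
    have hball : xs n ∈ closedBall w δ :=
      mem_closedBall.2 (by nlinarith [ih.1, infDist_nonneg (x := xs n) (s := Ω)])
    obtain ⟨hinf, hmove⟩ := hstep n hball
    refine ⟨(dist_add_mul_infDist_le_of_step hκ0 hκ1 hinf hmove).trans ih.1, ?_⟩
    calc infDist (xs (n + 1)) Ω ≤ κ * (κ ^ n * dist (xs 0) w) :=
          hinf.trans (mul_le_mul_of_nonneg_left ih.2 hκ0)
      _ = κ ^ (n + 1) * dist (xs 0) w := by ring

theorem exists_tendsto_of_infDist_contraction [CompleteSpace α] (hΩ : IsClosed Ω) (hw : w ∈ Ω)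
    (hκ0 : 0 ≤ κ) (hκ1 : κ < 1) (hx0 : dist (xs 0) w ≤ δ * (1 - κ) / 2)
    (hstep : ∀ n, xs n ∈ closedBall w δ → infDist (xs (n + 1)) Ω ≤ κ * infDist (xs n) Ω ∧
      dist (xs n) (xs (n + 1)) ≤ (1 + κ) * infDist (xs n) Ω) :
    ∃ xbar ∈ Ω ∩ closedBall w δ, Tendsto xs atTop (𝓝 xbar) ∧
      ∀ n, dist (xs n) xbar ≤ dist (xs 0) w * (1 + κ) / (1 - κ) * κ ^ n := by
  have hinv := mem_closedBall_and_infDist_le_pow hw hκ0 hκ1 hx0 hstep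
  have hgeom : ∀ n, dist (xs n) (xs (n + 1)) ≤ (1 + κ) * dist (xs 0) w * κ ^ n := fun n ↦
    calc dist (xs n) (xs (n + 1)) ≤ (1 + κ) * infDist (xs n) Ω := (hstep n (hinv n).1).2
      _ ≤ (1 + κ) * (κ ^ n * dist (xs 0) w) := mul_le_mul_of_nonneg_left (hinv n).2 (by linarith)
      _ = (1 + κ) * dist (xs 0) w * κ ^ n := by ring
  obtain ⟨xbar, hlim⟩ := cauchySeq_tendsto_of_complete (cauchySeq_of_le_geometric κ _ hκ1 hgeom)
  have hinf_lim : Tendsto (fun n ↦ κ ^ n * dist (xs 0) w) atTop (𝓝 0) := by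
    simpa using (tendsto_pow_atTop_nhds_zero_of_lt_one hκ0 hκ1).mul_const (dist (xs 0) w)
  have hxbarΩ : xbar ∈ Ω := by
    refine (hΩ.mem_iff_infDist_zero ⟨w, hw⟩).2 (le_antisymm ?_ infDist_nonneg)
    exact le_of_tendsto_of_tendsto' ((continuous_infDist_pt Ω).tendsto xbar |>.comp hlim)
      hinf_lim fun n ↦ (hinv n).2
  refine ⟨xbar, ⟨hxbarΩ, isClosed_closedBall.mem_of_tendsto hlim
    (Eventually.of_forall fun n ↦ (hinv n).1)⟩, hlim, fun n ↦ ?_⟩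
  exact (dist_le_of_le_geometric_of_tendsto κ _ hκ1 hgeom hlim n).trans_eq (by ring)

end PseudoMetric

section Projection

variable {E : Type*} [NormedAddCommGroup E] {Ω : Set E}

lemma dist_eq_infDist_of_mem_projSet {x p : E} (hp : p ∈ projSet Ω x) :
    dist x p = infDist x Ω := by
  refine le_antisymm ((le_infDist ⟨p, hp.1⟩).2 fun c hc ↦ ?_) (infDist_le_dist_of_mem hp.1)
  simpa only [dist_eq_norm] using hp.2 c hc

lemma projSet_nonempty [ProperSpace E] (hΩ : IsClosed Ω) (hne : Ω.Nonempty) (x : E) :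
    (projSet Ω x).Nonempty := by
  obtain ⟨p, hp, hpx⟩ := hΩ.exists_infDist_eq_dist hne x
  refine ⟨p, hp, fun c hc ↦ ?_⟩
  simpa only [← dist_eq_norm, ← hpx] using infDist_le_dist_of_mem hc

end Projection

theorem fejer_type_R_linear_convergence_general
    (Φ : X → Set X) (Ω : Set X) (hΩc : IsClosed Ω)
    (w : X) (hw : w ∈ Ω) (δ κ : ℝ) (hκ0 : 0 ≤ κ) (hκ1 : κ < 1)
    (hcontr : ∀ x ∈ closedBall w δ, ∀ xplus ∈ Φ x, ∀ xbar ∈ projSet Ω x,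
      ‖xplus - xbar‖ ≤ κ * ‖x - xbar‖)
    (xs : ℕ → X) (hx0 : ‖xs 0 - w‖ ≤ δ * (1 - κ) / 2)
    (hiter : ∀ n, xs (n + 1) ∈ Φ (xs n)) :
    ∃ xbar ∈ Ω ∩ closedBall w δ, Tendsto xs atTop (𝓝 xbar) ∧
      ∀ n, ‖xs n - xbar‖ ≤ ‖xs 0 - w‖ * (1 + κ) / (1 - κ) * κ ^ n := by
  have hstep : ∀ n, xs n ∈ closedBall w δ → infDist (xs (n + 1)) Ω ≤ κ * infDist (xs n) Ω ∧
      dist (xs n) (xs (n + 1)) ≤ (1 + κ) * infDist (xs n) Ω := fun n hn ↦ by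
    obtain ⟨p, hp⟩ := projSet_nonempty hΩc ⟨w, hw⟩ (xs n)
    refine infDist_le_mul_and_dist_le_of_dist_le_mul hp.1 (dist_eq_infDist_of_mem_projSet hp) ?_
    simpa only [dist_eq_norm] using hcontr _ hn _ (hiter n) p hp
  simpa only [dist_eq_norm] using
    exists_tendsto_of_infDist_contraction hΩc hw hκ0 hκ1 (by rwa [dist_eq_norm]) hstep

theorem fejer_type_R_linear_convergence
    (Φ : X → Set X) (Ω : Set X) (hΩc : IsClosed Ω) (hΩne : Ω.Nonempty)
    (w : X) (hw : w ∈ Ω) (δ κ : ℝ) (hδ : 0 < δ) (hκ0 : 0 ≤ κ) (hκ1 : κ < 1)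
    (hcontr : ∀ x ∈ closedBall w δ, ∀ xplus ∈ Φ x, ∀ xbar ∈ projSet Ω x,
      ‖xplus - xbar‖ ≤ κ * ‖x - xbar‖)
    (xs : ℕ → X) (hx0 : ‖xs 0 - w‖ ≤ δ * (1 - κ) / 2)
    (hiter : ∀ n, xs (n + 1) ∈ Φ (xs n)) :
    ∃ xbar ∈ Ω ∩ closedBall w δ, Tendsto xs atTop (𝓝 xbar) ∧
      ∀ n, ‖xs n - xbar‖ ≤ ‖xs 0 - w‖ * (1 + κ) / (1 - κ) * κ ^ n :=
  fejer_type_R_linear_convergence_general Φ Ω hΩc w hw δ κ hκ0 hκ1 hcontr xs hx0 hiter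
end

section
/- Let A be a closed subset of a Euclidean space that is (ε,δ)-regular at w ∈ A, and let U := {x : P_A(x) ⊆ B_δ(w)}. Then for every x ∈ U, every a ∈ P_A(x), and every x̄ ∈ A ∩ B_δ(w), one has ‖a − x̄‖ ≤ (1+ε)‖x − x̄‖. -/
open Metric Filter
open scoped Topology

variable {X : Type*} [NormedAddCommGroup X] [InnerProductSpace ℝ X] [FiniteDimensional ℝ X]

/-!
Since `a` is a nearest point of `A` to `x`, the vector `x - a` is a proximal normal to `A` at `a`,
so regularity gives `⟪x - a, x̄ - a⟫ ≤ ε ‖x - a‖ ‖x̄ - a‖ ≤ ε ‖x - x̄‖ ‖x̄ - a‖`. Writing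
`x̄ - a = (x - a) - (x - x̄)` and applying Cauchy–Schwarz to the second term yields
`‖x̄ - a‖² ≤ (1 + ε) ‖x - x̄‖ ‖x̄ - a‖`.
-/

section InnerProductSpace

variable {E : Type*} [NormedAddCommGroup E] [InnerProductSpace ℝ E]

theorem norm_sub_le_one_add_mul_norm_sub_of_inner_le {ε : ℝ} (hε : 0 ≤ ε) {x a z : E}
    (hinner : inner ℝ (x - a) (z - a) ≤ ε * ‖x - a‖ * ‖z - a‖) (hnear : ‖x - a‖ ≤ ‖x - z‖) :
    ‖z - a‖ ≤ (1 + ε) * ‖x - z‖ := by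
  have hsq : ‖z - a‖ * ‖z - a‖ ≤ (1 + ε) * ‖x - z‖ * ‖z - a‖ :=
    calc ‖z - a‖ * ‖z - a‖ = inner ℝ (x - a) (z - a) - inner ℝ (x - z) (z - a) := by
          rw [← inner_sub_left, sub_sub_sub_cancel_left, real_inner_self_eq_norm_mul_norm]
      _ ≤ ε * ‖x - a‖ * ‖z - a‖ + ‖x - z‖ * ‖z - a‖ := by
          linarith [neg_le_of_abs_le (abs_real_inner_le_norm (x - z) (z - a))]
      _ ≤ ε * ‖x - z‖ * ‖z - a‖ + ‖x - z‖ * ‖z - a‖ := by gcongr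
      _ = (1 + ε) * ‖x - z‖ * ‖z - a‖ := by ring
  rcases (norm_nonneg (z - a)).eq_or_lt with hza | hza
  · rw [← hza]
    positivity
  · exact le_of_mul_le_mul_right hsq hza

theorem sub_mem_proxNormalCone_of_mem_projSet {C : Set E} {x a : E} (ha : a ∈ projSet C x) :
    x - a ∈ proxNormalCone C a :=
  ⟨1, zero_le_one, x, ha, (one_smul ℝ _).symm⟩

end InnerProductSpace

theorem projection_quasi_nonexpansive_of_regular_general
    (A : Set X) (w : X)
    (ε δ : ℝ) (hε : 0 ≤ ε) (hreg : regAt A w ε δ)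
    (x : X) (hx : projSet A x ⊆ closedBall w δ)
    (a : X) (ha : a ∈ projSet A x)
    (xbar : X) (hxbar : xbar ∈ A ∩ closedBall w δ) :
    ‖a - xbar‖ ≤ (1 + ε) * ‖x - xbar‖ := by
  have hinner := hreg a ⟨ha.1, hx ha⟩ xbar hxbar (x - a) (sub_mem_proxNormalCone_of_mem_projSet ha)
  rw [norm_sub_rev]
  exact norm_sub_le_one_add_mul_norm_sub_of_inner_le hε hinner (ha.2 xbar hxbar.1)

theorem projection_quasi_nonexpansive_of_regular
    (A : Set X) (hA : IsClosed A) (w : X) (hw : w ∈ A)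
    (ε δ : ℝ) (hε : 0 ≤ ε) (hδ : 0 < δ) (hreg : regAt A w ε δ)
    (x : X) (hx : projSet A x ⊆ closedBall w δ)
    (a : X) (ha : a ∈ projSet A x)
    (xbar : X) (hxbar : xbar ∈ A ∩ closedBall w δ) :
    ‖a - xbar‖ ≤ (1 + ε) * ‖x - xbar‖ :=
  projection_quasi_nonexpansive_of_regular_general A w ε δ hε hreg x hx a ha xbar hxbar
end

section
/- Let A be a closed set that is (ε,2δ)-regular at w ∈ A with ε ∈ [0,1/4) and δ > 0. Then for every x in the closed ball B_δ(w): (i) P_A(x) ⊆ B_{2δ}(w), and (ii) P_B(R_A(x)) ⊆ B_{3δ}(w) for any closed set B with w ∈ B. -/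
open Metric Filter
open scoped Topology

variable {X : Type*} [NormedAddCommGroup X] [InnerProductSpace ℝ X] [FiniteDimensional ℝ X]

/-!
Any point of `C` is at least as close to `x` as a nearest point `a ∈ P_C x`, so `a` lies within
twice that distance of it; this gives (i) and, applied to `B` at `R_A x`, reduces (ii) to the bound
`‖R_A x - w‖ ≤ (3/2)‖x - w‖`. Writing `y = x - a`, `v = w - a`, we have `R_A x - w = -(y + v)`,
`x - w = y - v`, and `‖y + v‖² = ‖y - v‖² + 4⟪y, v⟫`. Regularity at `a` with the proximal normal
`y` bounds `4⟪y, v⟫` by `‖y‖‖v‖ ≤ ‖x - w‖ (‖R_A x - w‖ + ‖x - w‖) / 2`, and the resulting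
quadratic inequality in `‖R_A x - w‖` gives the bound.
-/

omit [InnerProductSpace ℝ X] [FiniteDimensional ℝ X] in
theorem dist_le_two_mul_of_mem_projSet {C : Set X} {x a c : X} (ha : a ∈ projSet C x)
    (hc : c ∈ C) : dist a c ≤ 2 * dist x c := by
  have hxa : dist x a ≤ dist x c := by simpa only [dist_eq_norm] using ha.2 c hc
  linarith [dist_triangle_left a c x]

omit [FiniteDimensional ℝ X] in
theorem sub_mem_proxNormalCone {C : Set X} {x a : X} (ha : a ∈ projSet C x) :
    x - a ∈ proxNormalCone C a :=
  ⟨1, zero_le_one, x, ha, (one_smul ℝ _).symm⟩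

omit [FiniteDimensional ℝ X] in
theorem norm_add_sq_eq_norm_sub_sq_add_four_inner (y v : X) :
    ‖y + v‖ ^ 2 = ‖y - v‖ ^ 2 + 4 * inner ℝ y v := by
  rw [norm_add_sq_real, norm_sub_sq_real]
  ring

omit [FiniteDimensional ℝ X] in
theorem two_mul_norm_le_norm_add_add_norm_sub (y v : X) :
    2 * ‖v‖ ≤ ‖y + v‖ + ‖y - v‖ := by
  have h : (2 : ℝ) • v = (y + v) - (y - v) := by module
  calc 2 * ‖v‖ = ‖(y + v) - (y - v)‖ := by rw [← h, norm_smul, Real.norm_two]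
    _ ≤ ‖y + v‖ + ‖y - v‖ := norm_sub_le _ _

omit [FiniteDimensional ℝ X] in
theorem dist_reflection_le_of_inner_le {A : Set X} {x a w : X} {ε : ℝ}
    (ha : a ∈ projSet A x) (hw : w ∈ A) (hε : ε ≤ 1 / 4)
    (hinner : inner ℝ (x - a) (w - a) ≤ ε * ‖x - a‖ * ‖w - a‖) :
    dist ((2 : ℝ) • a - x) w ≤ 3 / 2 * dist x w := by
  have hrefl : (2 : ℝ) • a - x - w = -((x - a) + (w - a)) := by module
  have hdiff : x - w = (x - a) - (w - a) := by abel
  rw [dist_eq_norm, dist_eq_norm, hrefl, norm_neg, hdiff]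
  set y := x - a
  set v := w - a
  have hyv : ‖y‖ ≤ ‖y - v‖ := hdiff ▸ ha.2 w hw
  have hsq := norm_add_sq_eq_norm_sub_sq_add_four_inner y v
  have hv := two_mul_norm_le_norm_add_add_norm_sub y v
  have hprod : 4 * ε * (‖y‖ * ‖v‖) ≤ ‖y‖ * ‖v‖ := by
    nlinarith [mul_nonneg (norm_nonneg y) (norm_nonneg v)]
  nlinarith [norm_nonneg y, norm_nonneg v, norm_nonneg (y + v), norm_nonneg (y - v)]

theorem projections_stay_local_general
    (A B : Set X) (w : X) (hwA : w ∈ A) (hwB : w ∈ B) (ε δ : ℝ) (hε : ε < 1 / 4)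
    (hreg : regAt A w ε (2 * δ))
    (x : X) (hx : x ∈ closedBall w δ) :
    projSet A x ⊆ closedBall w (2 * δ) ∧
      ∀ u ∈ reflSet A x, projSet B u ⊆ closedBall w (3 * δ) := by
  have hxw : dist x w ≤ δ := hx
  have hproj : projSet A x ⊆ closedBall w (2 * δ) := fun a ha =>
    (dist_le_two_mul_of_mem_projSet ha hwA).trans (by linarith)
  refine ⟨hproj, ?_⟩
  rintro _ ⟨a, ha, rfl⟩ b hb
  have hw : w ∈ A ∩ closedBall w (2 * δ) :=
    ⟨hwA, mem_closedBall_self (by linarith [dist_nonneg (x := x) (y := w)])⟩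
  have hinner := hreg a ⟨ha.1, hproj ha⟩ w hw (x - a) (sub_mem_proxNormalCone ha)
  have hrefl := dist_reflection_le_of_inner_le ha hwA hε.le hinner
  calc dist b w ≤ 2 * dist ((2 : ℝ) • a - x) w := dist_le_two_mul_of_mem_projSet hb hwB
    _ ≤ 3 * δ := by linarith

theorem projections_stay_local
    (A B : Set X) (hA : IsClosed A) (hB : IsClosed B)
    (w : X) (hwA : w ∈ A) (hwB : w ∈ B)
    (ε δ : ℝ) (hε0 : 0 ≤ ε) (hε : ε < 1 / 4) (hδ : 0 < δ)
    (hreg : regAt A w ε (2 * δ))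
    (x : X) (hx : x ∈ closedBall w δ) :
    projSet A x ⊆ closedBall w (2 * δ) ∧
      ∀ u ∈ reflSet A x, projSet B u ⊆ closedBall w (3 * δ) :=
  projections_stay_local_general A B w hwA hwB ε δ hε hreg x hx
end

section
/- Let A, B be closed sets and w ∈ A ∩ B. Define θ̄(N₁,N₂) := sup{⟨u,v⟩ : u ∈ N₁ ∩ B, v ∈ −N₂ ∩ B} for closed cones N₁, N₂ (B the closed unit ball). Then {A,B} is strongly regular at w, i.e., N_A(w) ∩ (−N_B(w)) = {0}, if and only if θ̄(N_A(w), N_B(w)) < 1. -/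
open Metric Filter
open scoped Topology

variable {X : Type*} [NormedAddCommGroup X] [InnerProductSpace ℝ X] [FiniteDimensional ℝ X]

/- The supremum defining `θ̄` is attained: it is taken over the image of the compact set
`(N₁ ∩ 𝔹) × (-N₂ ∩ 𝔹)` under the inner product. A maximiser `(u, v)` with `⟪u, v⟫ = 1` forces
`u = v`, a unit vector of `N₁ ∩ -N₂`; conversely a nonzero vector of `N₁ ∩ -N₂`, normalised,
pairs with itself to give `1`. -/

open scoped RealInnerProductSpace

section

variable {E : Type*} [NormedAddCommGroup E] [InnerProductSpace ℝ E]

lemma zero_mem_proxNormalCone {C : Set E} {x : E} (hx : x ∈ C) :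
    (0 : E) ∈ proxNormalCone C x :=
  ⟨0, le_rfl, x, ⟨hx, fun c _ => by simp⟩, by simp⟩

lemma zero_mem_limNormalCone {C : Set E} {w : E} (hw : w ∈ C) :
    (0 : E) ∈ limNormalCone C w :=
  ⟨fun _ => w, fun _ => 0, fun _ => hw, fun _ => zero_mem_proxNormalCone hw,
    tendsto_const_nhds, tendsto_const_nhds⟩

lemma smul_mem_proxNormalCone {C : Set E} {x u : E} {t : ℝ} (ht : 0 ≤ t)
    (hu : u ∈ proxNormalCone C x) : t • u ∈ proxNormalCone C x := by
  obtain ⟨s, hs, z, hz, rfl⟩ := hu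
  exact ⟨t * s, mul_nonneg ht hs, z, hz, smul_smul t s _⟩

lemma smul_mem_limNormalCone {C : Set E} {w u : E} {t : ℝ} (ht : 0 ≤ t)
    (hu : u ∈ limNormalCone C w) : t • u ∈ limNormalCone C w := by
  obtain ⟨xs, us, hxs, hus, hxw, huu⟩ := hu
  exact ⟨xs, fun n => t • us n, hxs, fun n => smul_mem_proxNormalCone ht (hus n), hxw,
    huu.const_smul t⟩

lemma limNormalCone_eq_preimage_closure (C : Set E) (w : E) :
    limNormalCone C w =
      (fun u => (w, u)) ⁻¹' closure {p : E × E | p.1 ∈ C ∧ p.2 ∈ proxNormalCone C p.1} := by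
  ext u
  simp only [Set.mem_preimage, mem_closure_iff_seq_limit, limNormalCone, Set.mem_ofPred_eq,
    nhds_prod_eq]
  constructor
  · rintro ⟨xs, us, hxs, hus, hxw, huu⟩
    exact ⟨fun n => (xs n, us n), fun n => ⟨hxs n, hus n⟩, hxw.prodMk huu⟩
  · rintro ⟨ps, hps, hlim⟩
    exact ⟨fun n => (ps n).1, fun n => (ps n).2, fun n => (hps n).1, fun n => (hps n).2,
      (tendsto_prod_iff'.mp hlim).1, (tendsto_prod_iff'.mp hlim).2⟩

lemma isClosed_limNormalCone (C : Set E) (w : E) : IsClosed (limNormalCone C w) := by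
  rw [limNormalCone_eq_preimage_closure]
  exact isClosed_closure.preimage (by fun_prop)

lemma eq_of_norm_le_one_of_one_le_inner {u v : E} (hu : ‖u‖ ≤ 1) (hv : ‖v‖ ≤ 1)
    (huv : 1 ≤ ⟪u, v⟫) : u = v := by
  have h : ‖u - v‖ ^ 2 ≤ 0 := by
    rw [norm_sub_sq_real]
    nlinarith [norm_nonneg u, norm_nonneg v]
  rw [← sub_eq_zero, ← norm_eq_zero]
  nlinarith [norm_nonneg (u - v)]

lemma thetaBar_eq_sSup_image (N₁ N₂ : Set E) :
    thetaBar N₁ N₂ = sSup ((fun p : E × E => ⟪p.1, p.2⟫) ''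
      ((N₁ ∩ closedBall 0 1) ×ˢ (-N₂ ∩ closedBall 0 1))) := by
  rw [thetaBar]
  congr 1
  ext r
  simp only [Set.mem_ofPred_eq, Set.mem_image, Set.mem_prod, Set.mem_inter_iff,
    mem_closedBall_zero_iff, Prod.exists]
  constructor
  · rintro ⟨u, hu, v, hv, hu1, hv1, rfl⟩
    exact ⟨u, v, ⟨⟨hu, hu1⟩, hv, hv1⟩, rfl⟩
  · rintro ⟨u, v, ⟨⟨hu, hu1⟩, hv, hv1⟩, rfl⟩
    exact ⟨u, hu, v, hv, hu1, hv1, rfl⟩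

lemma exists_inner_eq_thetaBar [FiniteDimensional ℝ E] {N₁ N₂ : Set E}
    (h₁ : IsClosed N₁) (h₂ : IsClosed N₂) (h0₁ : (0 : E) ∈ N₁) (h0₂ : (0 : E) ∈ N₂) :
    ∃ u ∈ N₁, ∃ v ∈ -N₂, ‖u‖ ≤ 1 ∧ ‖v‖ ≤ 1 ∧ thetaBar N₁ N₂ = ⟪u, v⟫ := by
  have hK : IsCompact ((N₁ ∩ closedBall (0 : E) 1) ×ˢ (-N₂ ∩ closedBall (0 : E) 1)) :=
    ((isCompact_closedBall 0 1).inter_left h₁).prod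
      ((isCompact_closedBall 0 1).inter_left h₂.neg)
  have hne : ((N₁ ∩ closedBall (0 : E) 1) ×ˢ (-N₂ ∩ closedBall (0 : E) 1)).Nonempty :=
    ⟨(0, 0), ⟨h0₁, by simp⟩, by simpa using h0₂, by simp⟩
  obtain ⟨⟨u, v⟩, ⟨⟨hu, hu1⟩, hv, hv1⟩, hmax⟩ :=
    (hK.image (continuous_fst.inner (𝕜 := ℝ) continuous_snd)).sSup_mem (hne.image _)
  rw [mem_closedBall_zero_iff] at hu1 hv1
  exact ⟨u, hu, v, hv, hu1, hv1, by rw [thetaBar_eq_sSup_image, ← hmax]⟩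

lemma one_le_thetaBar_of_mem {N₁ N₂ : Set E} {u : E} (hu₁ : u ∈ N₁) (hu₂ : u ∈ -N₂)
    (hu : ‖u‖ = 1) : 1 ≤ thetaBar N₁ N₂ := by
  have hbdd : BddAbove {r : ℝ | ∃ u ∈ N₁, ∃ v ∈ -N₂, ‖u‖ ≤ 1 ∧ ‖v‖ ≤ 1 ∧ r = ⟪u, v⟫} := by
    refine ⟨1, ?_⟩
    rintro r ⟨u, -, v, -, hu1, hv1, rfl⟩
    calc ⟪u, v⟫ ≤ ‖u‖ * ‖v‖ := real_inner_le_norm u v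
      _ ≤ 1 := mul_le_one₀ hu1 (norm_nonneg v) hv1
  refine le_csSup hbdd ⟨u, hu₁, u, hu₂, hu.le, hu.le, ?_⟩
  rw [real_inner_self_eq_norm_sq, hu, one_pow]

theorem inter_neg_eq_zero_iff_thetaBar_lt_one [FiniteDimensional ℝ E] {N₁ N₂ : Set E}
    (h₁ : IsClosed N₁) (h₂ : IsClosed N₂) (h0₁ : (0 : E) ∈ N₁) (h0₂ : (0 : E) ∈ N₂)
    (hcone₁ : ∀ t : ℝ, 0 ≤ t → ∀ u ∈ N₁, t • u ∈ N₁)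
    (hcone₂ : ∀ t : ℝ, 0 ≤ t → ∀ u ∈ N₂, t • u ∈ N₂) :
    N₁ ∩ -N₂ = {0} ↔ thetaBar N₁ N₂ < 1 := by
  constructor
  · intro hreg
    obtain ⟨u, hu, v, hv, hu1, hv1, hθ⟩ := exists_inner_eq_thetaBar h₁ h₂ h0₁ h0₂
    rw [hθ]
    by_contra! hge
    obtain rfl := eq_of_norm_le_one_of_one_le_inner hu1 hv1 hge
    have hu0 : u ∈ N₁ ∩ -N₂ := ⟨hu, hv⟩
    rw [hreg, Set.mem_singleton_iff] at hu0
    norm_num [hu0] at hge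
  · intro hlt
    refine Set.eq_singleton_iff_unique_mem.mpr ⟨⟨h0₁, by simpa using h0₂⟩, ?_⟩
    rintro u ⟨hu₁, hu₂⟩
    by_contra hu0
    have hc : (0 : ℝ) ≤ ‖u‖⁻¹ := by positivity
    have hnorm : ‖‖u‖⁻¹ • u‖ = 1 := norm_smul_inv_norm hu0
    have hmem₂ : ‖u‖⁻¹ • u ∈ -N₂ := by
      simpa only [Set.mem_neg, smul_neg] using hcone₂ _ hc _ hu₂
    exact (one_le_thetaBar_of_mem (hcone₁ _ hc _ hu₁) hmem₂ hnorm).not_gt hlt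

end

theorem strong_regularity_iff_thetaBar_lt_one_general
    (A B : Set X)
    (w : X) (hw : w ∈ A ∩ B) :
    limNormalCone A w ∩ -limNormalCone B w = {0} ↔
      thetaBar (limNormalCone A w) (limNormalCone B w) < 1 :=
  inter_neg_eq_zero_iff_thetaBar_lt_one (isClosed_limNormalCone A w) (isClosed_limNormalCone B w)
    (zero_mem_limNormalCone hw.1) (zero_mem_limNormalCone hw.2)
    (fun _ ht _ hu => smul_mem_limNormalCone ht hu)
    (fun _ ht _ hu => smul_mem_limNormalCone ht hu)

theorem strong_regularity_iff_thetaBar_lt_one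
    (A B : Set X) (hA : IsClosed A) (hB : IsClosed B)
    (w : X) (hw : w ∈ A ∩ B) :
    limNormalCone A w ∩ -limNormalCone B w = {0} ↔
      thetaBar (limNormalCone A w) (limNormalCone B w) < 1 :=
  strong_regularity_iff_thetaBar_lt_one_general A B w hw
end

section
/- Let A, B be closed sets with θ̄ := θ̄(N_A(w), N_B(w)) < 1 at w ∈ A ∩ B. Then for every θ ∈ (θ̄, 1) there exists δ > 0 such that whenever a ∈ A ∩ B_δ(w), b ∈ B ∩ B_δ(w), u ∈ N^P_A(a), and v ∈ N^P_B(b), one has ⟨u, v⟩ ≥ −θ‖u‖‖v‖. -/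
open Metric Filter
open scoped Topology

variable {X : Type*} [NormedAddCommGroup X] [InnerProductSpace ℝ X] [FiniteDimensional ℝ X]

/-!
Argue by contradiction: otherwise there are points `aₙ ∈ A`, `bₙ ∈ B` converging to `w` with
proximal normals `uₙ`, `vₙ` satisfying `⟪uₙ, vₙ⟫ < -θ ‖uₙ‖ ‖vₙ‖`. Normalizing, the unit normals
have a common convergent subsequence by compactness of the unit ball; its limits `U`, `V` are
limiting normals of `A` and `B` at `w`, so `(U, -V)` competes in the supremum defining `θ̄` and
`θ ≤ ⟪U, -V⟫ ≤ θ̄`.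
-/

section

variable {E : Type*} [NormedAddCommGroup E] [InnerProductSpace ℝ E]

lemma proxNormalCone_smul {C : Set E} {x u : E} (hu : u ∈ proxNormalCone C x)
    {c : ℝ} (hc : 0 ≤ c) : c • u ∈ proxNormalCone C x := by
  obtain ⟨t, ht, z, hz, rfl⟩ := hu
  exact ⟨c * t, mul_nonneg hc ht, z, hz, smul_smul c t _⟩

lemma mem_limNormalCone_of_tendsto_comp {C : Set E} {w U : E} {x u : ℕ → E}
    (hx : ∀ n, x n ∈ C) (hxw : Tendsto x atTop (𝓝 w))
    (hu : ∀ n, u n ∈ proxNormalCone C (x n)) {φ : ℕ → ℕ} (hφ : StrictMono φ)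
    (hU : Tendsto (u ∘ φ) atTop (𝓝 U)) : U ∈ limNormalCone C w :=
  ⟨x ∘ φ, u ∘ φ, fun n => hx (φ n), fun n => hu (φ n), hxw.comp hφ.tendsto_atTop, hU⟩

lemma exists_limNormalCone_inner_le [ProperSpace E] {A B : Set E} {w : E} {a b u v : ℕ → E}
    (ha : ∀ n, a n ∈ A) (hb : ∀ n, b n ∈ B)
    (haw : Tendsto a atTop (𝓝 w)) (hbw : Tendsto b atTop (𝓝 w))
    (hu : ∀ n, u n ∈ proxNormalCone A (a n)) (hv : ∀ n, v n ∈ proxNormalCone B (b n))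
    (hu1 : ∀ n, ‖u n‖ ≤ 1) (hv1 : ∀ n, ‖v n‖ ≤ 1) {c : ℝ} (huv : ∀ n, inner ℝ (u n) (v n) ≤ c) :
    ∃ U ∈ limNormalCone A w, ∃ V ∈ limNormalCone B w,
      ‖U‖ ≤ 1 ∧ ‖V‖ ≤ 1 ∧ inner ℝ U V ≤ c := by
  obtain ⟨⟨U, V⟩, ⟨hU1, hV1⟩, φ, hφ, hlim⟩ :=
    ((isCompact_closedBall (0 : E) 1).prod (isCompact_closedBall (0 : E) 1)).tendsto_subseq
      (x := fun n => (u n, v n))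
      fun n => ⟨mem_closedBall_zero_iff.2 (hu1 n), mem_closedBall_zero_iff.2 (hv1 n)⟩
  refine ⟨U, mem_limNormalCone_of_tendsto_comp ha haw hu hφ hlim.fst_nhds,
    V, mem_limNormalCone_of_tendsto_comp hb hbw hv hφ hlim.snd_nhds,
    mem_closedBall_zero_iff.1 hU1, mem_closedBall_zero_iff.1 hV1, ?_⟩
  exact le_of_tendsto (hlim.fst_nhds.inner hlim.snd_nhds) (Eventually.of_forall fun n => huv (φ n))

lemma bddAbove_inner_of_norm_le_one (N₁ N₂ : Set E) :
    BddAbove {r : ℝ | ∃ u ∈ N₁, ∃ v ∈ -N₂, ‖u‖ ≤ 1 ∧ ‖v‖ ≤ 1 ∧ r = (inner ℝ u v : ℝ)} := by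
  refine ⟨1, ?_⟩
  rintro _ ⟨u, -, v, -, hu, hv, rfl⟩
  calc inner ℝ u v ≤ ‖u‖ * ‖v‖ := real_inner_le_norm u v
    _ ≤ 1 := mul_le_one₀ hu (norm_nonneg v) hv

lemma neg_inner_le_thetaBar {N₁ N₂ : Set E} {u v : E} (hu : u ∈ N₁) (hv : v ∈ N₂)
    (hu1 : ‖u‖ ≤ 1) (hv1 : ‖v‖ ≤ 1) : -inner ℝ u v ≤ thetaBar N₁ N₂ := by
  refine le_csSup (bddAbove_inner_of_norm_le_one N₁ N₂) ⟨u, hu, -v, ?_, hu1, ?_, ?_⟩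
  · simpa using hv
  · rwa [norm_neg]
  · rw [inner_neg_right]

lemma ne_zero_of_inner_lt_neg_mul_norm {u v : E} {θ : ℝ}
    (h : inner ℝ u v < -(θ * ‖u‖ * ‖v‖)) : u ≠ 0 ∧ v ≠ 0 := by
  constructor <;> rintro rfl <;> simp at h

lemma inner_inv_norm_smul_lt_neg {u v : E} {θ : ℝ} (h : inner ℝ u v < -(θ * ‖u‖ * ‖v‖)) :
    inner ℝ (‖u‖⁻¹ • u) (‖v‖⁻¹ • v) < -θ := by
  obtain ⟨hu, hv⟩ := ne_zero_of_inner_lt_neg_mul_norm h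
  have huv : 0 < ‖u‖ * ‖v‖ := mul_pos (norm_pos_iff.2 hu) (norm_pos_iff.2 hv)
  rw [real_inner_smul_left, real_inner_smul_right, ← mul_assoc, ← mul_inv, inv_mul_lt_iff₀ huv]
  linarith

end

lemma tendsto_of_mem_closedBall_one_div_add_one {α : Type*} [PseudoMetricSpace α] {x : ℕ → α}
    {w : α} (hx : ∀ n : ℕ, x n ∈ closedBall w (1 / (n + 1))) : Tendsto x atTop (𝓝 w) :=
  tendsto_iff_dist_tendsto_zero.2 <|
    squeeze_zero (fun _ => dist_nonneg) hx tendsto_one_div_add_atTop_nhds_zero_nat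

theorem proximal_normals_angle_bound_of_thetaBar_general
    (A B : Set X) (w : X) (θ : ℝ) (hθ1 : thetaBar (limNormalCone A w) (limNormalCone B w) < θ) :
    ∃ δ > 0, ∀ a ∈ A ∩ closedBall w δ, ∀ b ∈ B ∩ closedBall w δ,
      ∀ u ∈ proxNormalCone A a, ∀ v ∈ proxNormalCone B b,
        -(θ * ‖u‖ * ‖v‖) ≤ (inner ℝ u v : ℝ) := by
  by_contra! hcon
  choose a ha b hb u hu v hv huv using fun n : ℕ => hcon (1 / (n + 1 : ℝ)) Nat.one_div_pos_of_nat
  have hnz n := ne_zero_of_inner_lt_neg_mul_norm (huv n)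
  obtain ⟨U, hU, V, hV, hU1, hV1, hUV⟩ := exists_limNormalCone_inner_le
    (fun n => (ha n).1) (fun n => (hb n).1)
    (tendsto_of_mem_closedBall_one_div_add_one fun n => (ha n).2)
    (tendsto_of_mem_closedBall_one_div_add_one fun n => (hb n).2)
    (fun n => proxNormalCone_smul (hu n) (inv_nonneg.2 (norm_nonneg _)))
    (fun n => proxNormalCone_smul (hv n) (inv_nonneg.2 (norm_nonneg _)))
    (fun n => (norm_smul_inv_norm (hnz n).1).le) (fun n => (norm_smul_inv_norm (hnz n).2).le)
    (fun n => (inner_inv_norm_smul_lt_neg (huv n)).le)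
  linarith [neg_inner_le_thetaBar hU hV hU1 hV1]

theorem proximal_normals_angle_bound_of_thetaBar
    (A B : Set X) (hA : IsClosed A) (hB : IsClosed B)
    (w : X) (hw : w ∈ A ∩ B)
    (hθbar : thetaBar (limNormalCone A w) (limNormalCone B w) < 1)
    (θ : ℝ) (hθ1 : thetaBar (limNormalCone A w) (limNormalCone B w) < θ) (hθ2 : θ < 1) :
    ∃ δ > 0, ∀ a ∈ A ∩ closedBall w δ, ∀ b ∈ B ∩ closedBall w δ,
      ∀ u ∈ proxNormalCone A a, ∀ v ∈ proxNormalCone B b,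
        -(θ * ‖u‖ * ‖v‖) ≤ (inner ℝ u v : ℝ) :=
  proximal_normals_angle_bound_of_thetaBar_general A B w θ hθ1
end

section
/- Let A and B be closed convex subsets of a Euclidean space with ri A ∩ ri B ≠ ∅, and let L := aff(A ∪ B) and T := (1/2)(Id + R_B R_A) the (single-valued) Douglas–Rachford operator. Then L ∩ Fix T = A ∩ B. -/
open Metric Filter
open scoped Topology

variable {X : Type*} [NormedAddCommGroup X] [InnerProductSpace ℝ X] [FiniteDimensional ℝ X]

/-! If `x ∈ aff (A ∪ B)` is fixed by `T` and `a := P_A x`, then also `a = P_B (2a - x)`, so the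
functional `⟪x - a, ·⟫` is maximised over `A` and minimised over `B` at `a`. At a common relative
interior point `w` it therefore takes the value `⟪x - a, a⟫` as well. A linear functional that
attains its maximum over a set at a relative interior point `w` is constant on the set, since from
`w` one can step a little further away from any other point of the set. So `⟪x - a, ·⟫` is
constant on `A ∪ B`, hence on its affine hull, which gives `‖x - a‖² = 0`. -/

section IntrinsicInterior

variable {E : Type*} [AddCommGroup E] [Module ℝ E] [TopologicalSpace E]
  [IsTopologicalAddGroup E] [ContinuousSMul ℝ E] {C : Set E} {w c : E}

theorem exists_pos_add_smul_sub_mem_of_mem_intrinsicInterior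
    (hw : w ∈ intrinsicInterior ℝ C) (hc : c ∈ C) :
    ∃ t : ℝ, 0 < t ∧ w + t • (w - c) ∈ C := by
  obtain ⟨y, hy, rfl⟩ := mem_intrinsicInterior.mp hw
  have hmem (t : ℝ) : (y : E) + t • ((y : E) - c) ∈ affineSpan ℝ C := by
    simpa [vsub_eq_sub, vadd_eq_add, add_comm] using
      AffineSubspace.smul_vsub_vadd_mem _ t y.2 (subset_affineSpan ℝ C hc) y.2
  let g : ℝ → affineSpan ℝ C := fun t => ⟨y + t • (y - c), hmem t⟩
  have hg : Continuous g := by fun_prop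
  have hg0 : g 0 = y := by simp [g]
  have hnear : ∀ᶠ t in 𝓝[>] (0 : ℝ), g t ∈ interior ((↑) ⁻¹' C) :=
    nhdsWithin_le_nhds (hg.continuousAt.preimage_mem_nhds (hg0 ▸ isOpen_interior.mem_nhds hy))
  obtain ⟨t, hgt, htpos⟩ := (hnear.and self_mem_nhdsWithin).exists
  exact ⟨t, htpos, (interior_subset hgt : g t ∈ (↑) ⁻¹' C)⟩

namespace LinearMap

variable (f : E →ₗ[ℝ] ℝ)

theorem eq_of_isMaxOn_of_mem_intrinsicInterior
    (hw : w ∈ intrinsicInterior ℝ C) (hmax : IsMaxOn f C w) (hc : c ∈ C) : f c = f w := by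
  obtain ⟨t, ht, hmem⟩ := exists_pos_add_smul_sub_mem_of_mem_intrinsicInterior hw hc
  have hbeyond : f w + t * (f w - f c) ≤ f w := by
    simpa using hmax hmem
  have hle : f c ≤ f w := hmax hc
  nlinarith

theorem eq_of_isMinOn_of_mem_intrinsicInterior
    (hw : w ∈ intrinsicInterior ℝ C) (hmin : IsMinOn f C w) (hc : c ∈ C) : f c = f w :=
  neg_inj.mp ((-f).eq_of_isMaxOn_of_mem_intrinsicInterior hw hmin.neg hc)

theorem eqOn_affineSpan_union_of_isMaxOn_of_isMinOn {A B : Set E} {a : E}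
    (hwA : w ∈ intrinsicInterior ℝ A) (hwB : w ∈ intrinsicInterior ℝ B)
    (hA : IsMaxOn f A a) (hB : IsMinOn f B a) :
    Set.EqOn f.toAffineMap (AffineMap.const ℝ E (f a)) (affineSpan ℝ (A ∪ B)) := by
  have hwa : f w = f a :=
    le_antisymm (hA (intrinsicInterior_subset hwA)) (hB (intrinsicInterior_subset hwB))
  refine AffineMap.eqOn_affineSpan ?_
  rintro c (hc | hc)
  · exact (f.eq_of_isMaxOn_of_mem_intrinsicInterior hwA (fun y hy => hwa ▸ hA hy) hc).trans hwa
  · exact (f.eq_of_isMinOn_of_mem_intrinsicInterior hwB (fun y hy => hwa ▸ hB hy) hc).trans hwa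

end LinearMap

end IntrinsicInterior

section Projection

variable {E : Type*} [NormedAddCommGroup E] {C : Set E} {x a : E}

theorem mem_projSet_self (hx : x ∈ C) : x ∈ projSet C x :=
  ⟨hx, fun c _ => by simp⟩

theorem isMaxOn_inner_of_mem_projSet [InnerProductSpace ℝ E] (hC : Convex ℝ C)
    (ha : a ∈ projSet C x) : IsMaxOn (innerₛₗ ℝ (x - a)) C a := by
  obtain ⟨haC, hmin⟩ := ha
  have : Nonempty C := ⟨⟨a, haC⟩⟩
  have hinf : ‖x - a‖ = ⨅ c : C, ‖x - c‖ :=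
    le_antisymm (le_ciInf fun c => hmin c c.2)
      (ciInf_le ⟨0, by rintro r ⟨c, rfl⟩; exact norm_nonneg _⟩ (⟨a, haC⟩ : C))
  intro c hc
  have hvar := (norm_eq_iInf_iff_real_inner_le_zero hC haC).mp hinf c hc
  rw [inner_sub_right] at hvar
  change inner ℝ (x - a) c ≤ inner ℝ (x - a) a
  linarith

theorem isMinOn_inner_of_mem_projSet [InnerProductSpace ℝ E] (hC : Convex ℝ C)
    (ha : a ∈ projSet C x) : IsMinOn (innerₛₗ ℝ (a - x)) C a := by
  rw [← neg_sub, map_neg]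
  exact (isMaxOn_inner_of_mem_projSet hC ha).neg

end Projection

theorem affine_hull_inter_fixedPoints_eq_inter_general
    (A B : Set X)
    (hAcv : Convex ℝ A) (hBcv : Convex ℝ B)
    (hri : (intrinsicInterior ℝ A ∩ intrinsicInterior ℝ B).Nonempty)
    (PA PB : X → X) (hPA : ∀ x, projSet A x = {PA x}) (hPB : ∀ x, projSet B x = {PB x})
    (T : X → X) (hT : ∀ x, T x = PB ((2:ℝ) • PA x - x) + x - PA x) :
    ((affineSpan ℝ (A ∪ B) : AffineSubspace ℝ X) : Set X) ∩ {x | T x = x} = A ∩ B := by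
  obtain ⟨w, hwA, hwB⟩ := hri
  ext x
  constructor
  · rintro ⟨hxL, hTx⟩
    set a := PA x
    have hb : PB ((2:ℝ) • a - x) = a := by
      have hfix := (hT x).symm.trans hTx
      rwa [add_sub_assoc, ← eq_sub_iff_add_eq, sub_sub_cancel] at hfix
    have haA : a ∈ projSet A x := by rw [hPA]; rfl
    have haB : a ∈ projSet B ((2:ℝ) • a - x) := by rw [hPB, hb]; rfl
    have hmaxA := isMaxOn_inner_of_mem_projSet hAcv haA
    have hminB : IsMinOn (innerₛₗ ℝ (x - a)) B a := by
      convert isMinOn_inner_of_mem_projSet hBcv haB using 3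
      module
    have hxa : inner ℝ (x - a) x = inner ℝ (x - a) a :=
      (innerₛₗ ℝ (x - a)).eqOn_affineSpan_union_of_isMaxOn_of_isMinOn hwA hwB hmaxA hminB hxL
    have hx : x = a :=
      sub_eq_zero.mp (inner_self_eq_zero.mp (by rw [inner_sub_right (𝕜 := ℝ), hxa, sub_self]))
    exact hx ▸ ⟨haA.1, haB.1⟩
  · rintro ⟨hxA, hxB⟩
    have hxPA : PA x = x := (hPA x ▸ mem_projSet_self hxA : x ∈ ({PA x} : Set X)).symm
    have hxPB : PB x = x := (hPB x ▸ mem_projSet_self hxB : x ∈ ({PB x} : Set X)).symm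
    refine ⟨subset_affineSpan ℝ (A ∪ B) (Or.inl hxA), ?_⟩
    show T x = x
    simp only [hT, hxPA, two_smul, add_sub_cancel_right, hxPB]

theorem affine_hull_inter_fixedPoints_eq_inter
    (A B : Set X) (hAc : IsClosed A) (hBc : IsClosed B)
    (hAcv : Convex ℝ A) (hBcv : Convex ℝ B)
    (hAne : A.Nonempty) (hBne : B.Nonempty)
    (hri : (intrinsicInterior ℝ A ∩ intrinsicInterior ℝ B).Nonempty)
    (PA PB : X → X) (hPA : ∀ x, projSet A x = {PA x}) (hPB : ∀ x, projSet B x = {PB x})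
    (T : X → X) (hT : ∀ x, T x = PB ((2:ℝ) • PA x - x) + x - PA x) :
    ((affineSpan ℝ (A ∪ B) : AffineSubspace ℝ X) : Set X) ∩ {x | T x = x} = A ∩ B :=
  affine_hull_inter_fixedPoints_eq_inter_general A B hAcv hBcv hri PA PB hPA hPB T hT
end

section
/- Let A and B be nonempty closed convex subsets of a Euclidean space with ri A ∩ ri B ≠ ∅, L := aff(A ∪ B), and T := (1/2)(Id + R_B R_A). Then for every starting point x₀ ∈ X, the Douglas–Rachford sequence xₙ₊₁ = T(xₙ) converges R-linearly to a fixed point x̄ of T, and P_A x̄ = P_B x̄ = x̄ − (x₀ − P_L x₀) ∈ A ∩ B. -/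
open Metric Filter
open scoped Topology

variable {X : Type*} [NormedAddCommGroup X] [InnerProductSpace ℝ X] [FiniteDimensional ℝ X]

/-!
The Douglas–Rachford operator `T` is firmly nonexpansive, and every point of
`F = {w | P_L w ∈ A ∩ B}` is fixed by it, so `Dₙ = dist(xₙ, F)` satisfies
`D²ₙ₊₁ + ‖xₙ - xₙ₊₁‖² ≤ D²ₙ`. A point `z ∈ ri A ∩ ri B` yields a local error bound
`Dₙ ≤ c ‖xₙ - T xₙ‖` on the Fejér-bounded orbit: the normals `x - P_A x` and `R_A x - P_B R_A x`
have small components along the hulls of `A` and `B`, hence `P_L x` is close to both sets, and the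
balls around `z` turn this into a nearby point of `A ∩ B`. So `Dₙ` decays geometrically and `(xₙ)`
converges R-linearly. Since `T x - x ∈ L - L`, the normal component `x - P_L x` is invariant; at the
limit `x̄` the normal `x̄ - P_A x̄` is orthogonal to `L`, so `P_A x̄ = P_L x̄ = x̄ - (x₀ - P_L x₀)`.
-/

open scoped RealInnerProductSpace

section MetricProjection

variable {E : Type*} [NormedAddCommGroup E]

def IsMetricProj (C : Set E) (P : E → E) : Prop := ∀ x, projSet C x = {P x}

variable [InnerProductSpace ℝ E] in
theorem mem_projSet_iff_inner_le_zero {C : Set E} (hC : Convex ℝ C) {x a : E} :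
    a ∈ projSet C x ↔ a ∈ C ∧ ∀ c ∈ C, ⟪x - a, c - a⟫ ≤ 0 := by
  have hbdd : BddBelow (Set.range fun c : C => ‖x - c‖) :=
    ⟨0, by rintro _ ⟨c, rfl⟩; exact norm_nonneg _⟩
  refine ⟨fun ⟨ha, hmin⟩ => ⟨ha, ?_⟩, fun ⟨ha, hinner⟩ => ⟨ha, fun c hc => ?_⟩⟩
  · have : Nonempty C := ⟨⟨a, ha⟩⟩
    exact (norm_eq_iInf_iff_real_inner_le_zero hC ha).1 <|
      le_antisymm (le_ciInf fun c => hmin c c.2) (ciInf_le hbdd ⟨a, ha⟩)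
  · rw [(norm_eq_iInf_iff_real_inner_le_zero hC ha).2 hinner]
    exact ciInf_le hbdd ⟨c, hc⟩

namespace IsMetricProj

variable {C : Set E} {P : E → E}

theorem mem_projSet (hP : IsMetricProj C P) (x : E) : P x ∈ projSet C x := by
  rw [hP x]; rfl

theorem mem (hP : IsMetricProj C P) (x : E) : P x ∈ C := (hP.mem_projSet x).1

theorem eq_of_mem_projSet (hP : IsMetricProj C P) {x a : E} (ha : a ∈ projSet C x) : P x = a := by
  rw [hP x] at ha; exact ha.symm

theorem apply_eq_self (hP : IsMetricProj C P) {a : E} (ha : a ∈ C) : P a = a :=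
  hP.eq_of_mem_projSet ⟨ha, fun _ _ => by simp⟩

variable [InnerProductSpace ℝ E]

theorem inner_le_zero (hC : Convex ℝ C) (hP : IsMetricProj C P) (x : E) :
    ∀ c ∈ C, ⟪x - P x, c - P x⟫ ≤ 0 :=
  ((mem_projSet_iff_inner_le_zero hC).1 (hP.mem_projSet x)).2

theorem eq_of_inner_le_zero (hC : Convex ℝ C) (hP : IsMetricProj C P) {x a : E} (ha : a ∈ C)
    (h : ∀ c ∈ C, ⟪x - a, c - a⟫ ≤ 0) : P x = a :=
  hP.eq_of_mem_projSet ((mem_projSet_iff_inner_le_zero hC).2 ⟨ha, h⟩)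

theorem norm_sub_sq_le_inner (hC : Convex ℝ C) (hP : IsMetricProj C P) (x y : E) :
    ‖P x - P y‖ ^ 2 ≤ ⟪x - y, P x - P y⟫ := by
  have hx := hP.inner_le_zero hC x _ (hP.mem y)
  have hy := hP.inner_le_zero hC y _ (hP.mem x)
  rw [← neg_sub (P x) (P y), inner_neg_right] at hx
  rw [show x - y = (x - P x) + (P x - P y) - (y - P y) by abel, inner_sub_left, inner_add_left,
    real_inner_self_eq_norm_sq]
  linarith

theorem norm_sub_le (hC : Convex ℝ C) (hP : IsMetricProj C P) (x y : E) :
    ‖P x - P y‖ ≤ ‖x - y‖ := by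
  have h := (hP.norm_sub_sq_le_inner hC x y).trans (real_inner_le_norm _ _)
  rcases (norm_nonneg (P x - P y)).eq_or_lt with h0 | hpos
  · rw [← h0]; exact norm_nonneg _
  · nlinarith

theorem continuous (hC : Convex ℝ C) (hP : IsMetricProj C P) : Continuous P :=
  (LipschitzWith.of_dist_le_mul (K := 1) fun x y => by
    simpa [dist_eq_norm] using hP.norm_sub_le hC x y).continuous

theorem norm_reflection_sub_sq_le (hC : Convex ℝ C) (hP : IsMetricProj C P) (x y : E) :
    ‖((2 : ℝ) • P x - x) - ((2 : ℝ) • P y - y)‖ ^ 2 ≤ ‖x - y‖ ^ 2 := by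
  have hmono := hP.norm_sub_sq_le_inner hC x y
  rw [show ((2 : ℝ) • P x - x) - ((2 : ℝ) • P y - y) = (2 : ℝ) • (P x - P y) - (x - y) by
      module, norm_sub_sq_real, norm_smul, real_inner_smul_left, real_inner_comm,
    Real.norm_two]
  nlinarith

end IsMetricProj

end MetricProjection

def FirmlyNonexpansive {E : Type*} [NormedAddCommGroup E] (T : E → E) : Prop :=
  ∀ x y, ‖T x - T y‖ ^ 2 + ‖(x - T x) - (y - T y)‖ ^ 2 ≤ ‖x - y‖ ^ 2

namespace FirmlyNonexpansive

variable {E : Type*} [NormedAddCommGroup E] {T : E → E}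

theorem norm_sub_le (hT : FirmlyNonexpansive T) (x y : E) : ‖T x - T y‖ ≤ ‖x - y‖ :=
  (pow_le_pow_iff_left₀ (norm_nonneg _) (norm_nonneg _) two_ne_zero).1 <| by
    linarith [hT x y, sq_nonneg ‖(x - T x) - (y - T y)‖]

theorem continuous (hT : FirmlyNonexpansive T) : Continuous T :=
  (LipschitzWith.of_dist_le_mul (K := 1) fun x y => by
    simpa [dist_eq_norm] using hT.norm_sub_le x y).continuous

theorem norm_sub_fixedPoint_le {xs : ℕ → E} (hT : FirmlyNonexpansive T)
    (hiter : ∀ n, xs (n + 1) = T (xs n)) {z : E} (hz : T z = z) (n : ℕ) :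
    ‖xs n - z‖ ≤ ‖xs 0 - z‖ := by
  induction n with
  | zero => rfl
  | succ n ih => calc
      ‖xs (n + 1) - z‖ = ‖T (xs n) - T z‖ := by rw [hiter, hz]
      _ ≤ ‖xs n - z‖ := hT.norm_sub_le _ _
      _ ≤ ‖xs 0 - z‖ := ih

theorem infDist_sq_add_norm_sq_le (hT : FirmlyNonexpansive T) {F : Set E} (hF : F.Nonempty)
    (hfix : ∀ f ∈ F, T f = f) (x : E) :
    infDist (T x) F ^ 2 + ‖x - T x‖ ^ 2 ≤ infDist x F ^ 2 := by
  have hsqrt : √(infDist (T x) F ^ 2 + ‖x - T x‖ ^ 2) ≤ infDist x F := by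
    refine (le_infDist hF).2 fun f hf => Real.sqrt_le_iff.2 ⟨dist_nonneg, ?_⟩
    have hfirm := hT x f
    rw [hfix f hf, sub_self, sub_zero] at hfirm
    have hdist : infDist (T x) F ≤ ‖T x - f‖ := dist_eq_norm (T x) f ▸ infDist_le_dist_of_mem hf
    rw [dist_eq_norm]
    nlinarith [infDist_nonneg (x := T x) (s := F)]
  calc infDist (T x) F ^ 2 + ‖x - T x‖ ^ 2
      = √(infDist (T x) F ^ 2 + ‖x - T x‖ ^ 2) ^ 2 := (Real.sq_sqrt (by positivity)).symm
    _ ≤ infDist x F ^ 2 := pow_le_pow_left₀ (Real.sqrt_nonneg _) hsqrt 2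

end FirmlyNonexpansive

theorem exists_tendsto_of_sq_add_sq_le {α : Type*} [MetricSpace α] [CompleteSpace α]
    {xs : ℕ → α} {D : ℕ → ℝ} {c : ℝ} (hc : 1 ≤ c) (hD : ∀ n, 0 ≤ D n)
    (hdecr : ∀ n, D (n + 1) ^ 2 + dist (xs n) (xs (n + 1)) ^ 2 ≤ D n ^ 2)
    (hbound : ∀ n, D n ≤ c * dist (xs n) (xs (n + 1))) :
    ∃ xbar, Tendsto xs atTop (𝓝 xbar) ∧
      ∃ C, 0 ≤ C ∧ ∃ κ ∈ Set.Ico (0 : ℝ) 1, ∀ n, dist (xs n) xbar ≤ C * κ ^ n := by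
  set κ := √(1 - 1 / c ^ 2)
  have hκ0 : 0 ≤ κ := Real.sqrt_nonneg _
  have hinv : 0 < 1 / c ^ 2 := by positivity
  have hinv1 : 1 / c ^ 2 ≤ 1 := by rw [div_le_one (by positivity)]; nlinarith
  have hκsq : κ ^ 2 = 1 - 1 / c ^ 2 := Real.sq_sqrt (by linarith)
  have hκ1 : κ < 1 := by nlinarith
  have hcontract : ∀ n, D (n + 1) ≤ κ * D n := fun n => by
    have hstep : D n ^ 2 * (1 / c ^ 2) ≤ dist (xs n) (xs (n + 1)) ^ 2 := by
      rw [mul_one_div, div_le_iff₀ (by positivity), ← mul_pow]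
      exact pow_le_pow_left₀ (hD n) (by linarith [hbound n]) 2
    refine (pow_le_pow_iff_left₀ (hD _) (mul_nonneg hκ0 (hD n)) two_ne_zero).1 ?_
    rw [mul_pow, hκsq]
    nlinarith [hdecr n]
  have hgeom : ∀ n, D n ≤ D 0 * κ ^ n := fun n => by
    induction n with
    | zero => simp
    | succ n ih => calc
        D (n + 1) ≤ κ * D n := hcontract n
        _ ≤ κ * (D 0 * κ ^ n) := by gcongr
        _ = D 0 * κ ^ (n + 1) := by ring
  have hdist : ∀ n, dist (xs n) (xs (n + 1)) ≤ D 0 * κ ^ n := fun n =>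
    ((pow_le_pow_iff_left₀ dist_nonneg (hD n) two_ne_zero).1
      (by nlinarith [hdecr n, sq_nonneg (D (n + 1))])).trans (hgeom n)
  obtain ⟨xbar, hlim⟩ :=
    cauchySeq_tendsto_of_complete (cauchySeq_of_le_geometric κ (D 0) hκ1 hdist)
  refine ⟨xbar, hlim, D 0 / (1 - κ), div_nonneg (hD 0) (by linarith), κ, ⟨hκ0, hκ1⟩, fun n => ?_⟩
  calc dist (xs n) xbar ≤ D 0 * κ ^ n / (1 - κ) :=
        dist_le_of_le_geometric_of_tendsto κ (D 0) hκ1 hdist hlim n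
    _ = D 0 / (1 - κ) * κ ^ n := by ring

theorem Continuous.apply_eq_of_tendsto {α : Type*} [TopologicalSpace α] [T2Space α] {f : α → α}
    (hf : Continuous f) {xs : ℕ → α} (hiter : ∀ n, xs (n + 1) = f (xs n)) {a : α}
    (hlim : Tendsto xs atTop (𝓝 a)) : f a = a :=
  tendsto_nhds_unique ((hf.tendsto a).comp hlim)
    (by simpa only [Function.comp_def, ← hiter] using (tendsto_add_atTop_iff_nat 1).2 hlim)

section DouglasRachford

variable {E : Type*} [NormedAddCommGroup E] [InnerProductSpace ℝ E] {A B : Set E} {PA PB T : E → E}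

theorem firmlyNonexpansive_douglasRachford (hA : Convex ℝ A) (hB : Convex ℝ B)
    (hPA : IsMetricProj A PA) (hPB : IsMetricProj B PB)
    (hT : ∀ x, T x = PB ((2 : ℝ) • PA x - x) + x - PA x) : FirmlyNonexpansive T := by
  intro x y
  set R : E → E := fun x => (2 : ℝ) • PB ((2 : ℝ) • PA x - x) - ((2 : ℝ) • PA x - x)
  have hRR : ‖R x - R y‖ ^ 2 ≤ ‖x - y‖ ^ 2 :=
    (hPB.norm_reflection_sub_sq_le hB _ _).trans (hPA.norm_reflection_sub_sq_le hA x y)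
  have hTdiff : T x - T y = (2⁻¹ : ℝ) • ((x - y) + (R x - R y)) := by
    simp only [R, hT]; module
  have hIdiff : (x - T x) - (y - T y) = (2⁻¹ : ℝ) • ((x - y) - (R x - R y)) := by
    simp only [R, hT]; module
  rw [hTdiff, hIdiff, norm_smul, norm_smul, mul_pow, mul_pow, ← mul_add,
    parallelogram_law_with_norm ℝ, norm_inv, Real.norm_two]
  linarith

end DouglasRachford

section AffineProjection

variable {E : Type*} [NormedAddCommGroup E] [InnerProductSpace ℝ E] {L : AffineSubspace ℝ E}
  {PL : E → E}

theorem AffineSubspace.direction_affineSpan_union {A B : Set E} {z : E} (hzA : z ∈ A)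
    (hzB : z ∈ B) :
    (affineSpan ℝ (A ∪ B)).direction = vectorSpan ℝ A ⊔ vectorSpan ℝ B := by
  rw [AffineSubspace.span_union,
    AffineSubspace.direction_sup (mem_affineSpan ℝ hzA) (mem_affineSpan ℝ hzB), vsub_self,
    Submodule.span_zero_singleton, sup_bot_eq, direction_affineSpan, direction_affineSpan]

namespace IsMetricProj

theorem sub_mem_orthogonal_direction (hPL : IsMetricProj (L : Set E) PL) (x : E) :
    x - PL x ∈ L.directionᗮ := by
  have hle : ∀ v ∈ L.direction, ⟪v, x - PL x⟫ ≤ 0 := fun v hv => by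
    simpa [real_inner_comm] using
      hPL.inner_le_zero L.convex x _ (AffineSubspace.vadd_mem_of_mem_direction hv (hPL.mem x))
  exact (Submodule.mem_orthogonal _ _).2 fun v hv =>
    le_antisymm (hle v hv) (by simpa [inner_neg_left] using hle (-v) (neg_mem hv))

theorem eq_of_sub_mem_orthogonal_direction {S : Set E} {P : E → E} (hS : Convex ℝ S)
    (hP : IsMetricProj S P) (hSL : S ⊆ L) {x p : E} (hp : p ∈ S)
    (horth : x - p ∈ L.directionᗮ) : P x = p :=
  hP.eq_of_inner_le_zero hS hp fun _ hc => le_of_eq <|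
    (Submodule.mem_orthogonal' _ _).1 horth _ (L.vsub_mem_direction (hSL hc) (hSL hp))

theorem add_of_mem_direction (hPL : IsMetricProj (L : Set E) PL) (x : E) {v : E}
    (hv : v ∈ L.direction) : PL (x + v) = PL x + v :=
  hPL.eq_of_sub_mem_orthogonal_direction L.convex le_rfl
    (by simpa [add_comm] using L.vadd_mem_of_mem_direction hv (hPL.mem x))
    (by simpa using hPL.sub_mem_orthogonal_direction x)

theorem eq_add_starProjection [L.direction.HasOrthogonalProjection]
    (hPL : IsMetricProj (L : Set E) PL) (x : E) {a : E} (ha : a ∈ L) :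
    PL x = a + L.direction.starProjection (x - a) :=
  hPL.eq_of_sub_mem_orthogonal_direction L.convex le_rfl
    (by simpa [add_comm] using
      L.vadd_mem_of_mem_direction (L.direction.starProjection_apply_mem (x - a)) ha)
    (by simpa [sub_sub] using L.direction.sub_starProjection_mem_orthogonal (x - a))

end IsMetricProj

end AffineProjection

section LinearRegularity

theorem Submodule.exists_norm_le_mul_norm_add_of_disjoint {F : Type*} [NormedAddCommGroup F]
    [NormedSpace ℝ F] [FiniteDimensional ℝ F] {U W : Submodule ℝ F} (h : Disjoint U W) :
    ∃ C, 0 ≤ C ∧ ∀ u ∈ U, ∀ w ∈ W, ‖u‖ ≤ C * ‖u + w‖ := by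
  have hker : LinearMap.ker (U.subtype.coprod W.subtype) = ⊥ := by
    refine LinearMap.ker_eq_bot'.2 fun ⟨u, w⟩ huw => ?_
    have huw : (u : F) + w = 0 := huw
    have hu : (u : F) = 0 :=
      Submodule.disjoint_def.1 h u u.2 (eq_neg_of_add_eq_zero_left huw ▸ neg_mem w.2)
    have hw : (w : F) = 0 := by rwa [hu, zero_add] at huw
    exact Prod.ext (Subtype.ext hu) (Subtype.ext hw)
  obtain ⟨K, -, hK⟩ := (U.subtype.coprod W.subtype).exists_antilipschitzWith hker
  refine ⟨K, K.2, fun u hu w hw => ?_⟩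
  set x : U × W := (⟨u, hu⟩, ⟨w, hw⟩)
  calc ‖u‖ = ‖x.1‖ := rfl
    _ ≤ ‖x‖ := norm_fst_le x
    _ ≤ K * ‖u + w‖ := by
      simpa only [dist_zero_right, map_zero, LinearMap.coprod_apply, Submodule.subtype_apply] using
        hK.le_mul_dist x 0

variable {E : Type*} [NormedAddCommGroup E] [InnerProductSpace ℝ E] [FiniteDimensional ℝ E]

theorem Submodule.exists_norm_sub_starProjection_inf_le (U W : Submodule ℝ E) :
    ∃ C, 0 ≤ C ∧ ∀ s, ∀ u ∈ U, ∀ w ∈ W,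
      ‖s - (U ⊓ W).starProjection s‖ ≤ C * (‖s - u‖ + ‖s - w‖) := by
  set f : (U ⊓ W)ᗮ →ₗ[ℝ] E × E :=
    (Uᗮ.starProjection.toLinearMap.prod Wᗮ.starProjection.toLinearMap).comp (U ⊓ W)ᗮ.subtype
  have hker : LinearMap.ker f = ⊥ := by
    refine LinearMap.ker_eq_bot'.2 fun ⟨r, hr⟩ hfr => ?_
    have hrU : Uᗮ.starProjection r = 0 := congrArg Prod.fst hfr
    have hrW : Wᗮ.starProjection r = 0 := congrArg Prod.snd hfr
    rw [Submodule.starProjection_apply_eq_zero_iff, Submodule.orthogonal_orthogonal] at hrU hrW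
    have hr0 : r ∈ (U ⊓ W) ⊓ (U ⊓ W)ᗮ := ⟨⟨hrU, hrW⟩, hr⟩
    rw [Submodule.inf_orthogonal_eq_bot, Submodule.mem_bot] at hr0
    exact Subtype.ext hr0
  obtain ⟨K, -, hK⟩ := f.exists_antilipschitzWith hker
  refine ⟨K, K.2, fun s u hu w hw => ?_⟩
  set r := s - (U ⊓ W).starProjection s
  have hr : r ∈ (U ⊓ W)ᗮ := (U ⊓ W).sub_starProjection_mem_orthogonal s
  -- `r` differs from `s - u` by an element of `U`, which `P_{Uᗮ}` kills; likewise for `W`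
  have hproj : ∀ {Y : Submodule ℝ E}, U ⊓ W ≤ Y → ∀ y ∈ Y,
      ‖Yᗮ.starProjection r‖ ≤ ‖s - y‖ := fun {Y} hY y hy => by
    have hdiff : r - (s - y) ∈ Yᗮᗮ := by
      rw [Y.orthogonal_orthogonal, show r - (s - y) = y - (U ⊓ W).starProjection s by
        simp only [r]; abel]
      exact sub_mem hy (hY ((U ⊓ W).starProjection_apply_mem s))
    rw [← sub_add_cancel r (s - y), map_add, (Submodule.starProjection_apply_eq_zero_iff _).2 hdiff,
      zero_add]
    exact Yᗮ.norm_starProjection_apply_le _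
  have hfr : ‖f ⟨r, hr⟩‖ = max ‖Uᗮ.starProjection r‖ ‖Wᗮ.starProjection r‖ := rfl
  calc ‖r‖ = ‖(⟨r, hr⟩ : (U ⊓ W)ᗮ)‖ := rfl
    _ ≤ K * ‖f ⟨r, hr⟩‖ := by simpa only [dist_zero_right, map_zero] using hK.le_mul_dist ⟨r, hr⟩ 0
    _ ≤ K * (‖s - u‖ + ‖s - w‖) := by
      rw [hfr]
      gcongr
      refine max_le ?_ ?_
      · linarith [hproj inf_le_left u hu, norm_nonneg (s - w)]
      · linarith [hproj inf_le_right w hw, norm_nonneg (s - u)]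

theorem Submodule.exists_norm_starProjection_sup_le (U W : Submodule ℝ E) :
    ∃ C, 0 ≤ C ∧ ∀ u v : E, u + v ∈ U ⊔ W →
      ‖(U ⊔ W).starProjection u‖ ≤ C * (‖u + v‖ + ‖U.starProjection u‖ + ‖W.starProjection v‖) := by
  set V := U ⊔ W
  have hdisj : Disjoint (Uᗮ ⊓ V) (Wᗮ ⊓ V) := by
    rw [disjoint_iff, inf_inf_inf_comm, Submodule.inf_orthogonal, inf_idem, inf_comm]
    exact V.inf_orthogonal_eq_bot
  obtain ⟨C, hC, hbound⟩ := Submodule.exists_norm_le_mul_norm_add_of_disjoint hdisj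
  have hperp : ∀ {Y : Submodule ℝ E}, Y ≤ V → ∀ t : E,
      V.starProjection t - Y.starProjection t ∈ Yᗮ ⊓ V := fun {Y} hY t => by
    refine ⟨?_, sub_mem (V.starProjection_apply_mem t) (hY (Y.starProjection_apply_mem t))⟩
    rw [← Submodule.starProjection_comp_starProjection_of_le hY]
    exact Y.sub_starProjection_mem_orthogonal _
  refine ⟨C + 1, by positivity, fun u v huv => ?_⟩
  have hsum : (V.starProjection u - U.starProjection u) + (V.starProjection v - W.starProjection v)
      = (u + v) - U.starProjection u - W.starProjection v := by
    rw [← Submodule.starProjection_eq_self_iff.2 huv, map_add]; abel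
  have hp := hbound _ (hperp le_sup_left u) _ (hperp le_sup_right v)
  rw [hsum] at hp
  have htri : ‖(u + v) - U.starProjection u - W.starProjection v‖
      ≤ ‖u + v‖ + ‖U.starProjection u‖ + ‖W.starProjection v‖ :=
    norm_sub_le_of_le (norm_sub_le _ _) le_rfl
  calc ‖V.starProjection u‖
      ≤ ‖V.starProjection u - U.starProjection u‖ + ‖U.starProjection u‖ := norm_le_norm_sub_add _ _
    _ ≤ C * (‖u + v‖ + ‖U.starProjection u‖ + ‖W.starProjection v‖) + ‖U.starProjection u‖ := by
      gcongr; exact hp.trans (by gcongr)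
    _ ≤ (C + 1) * (‖u + v‖ + ‖U.starProjection u‖ + ‖W.starProjection v‖) := by
      nlinarith [norm_nonneg (u + v), norm_nonneg (W.starProjection v)]

end LinearRegularity

section RelativeInterior

variable {E : Type*} [NormedAddCommGroup E] [NormedSpace ℝ E]

theorem exists_add_mem_of_mem_intrinsicInterior {A : Set E} {z : E}
    (hz : z ∈ intrinsicInterior ℝ A) :
    ∃ ρ > 0, ∀ w ∈ vectorSpan ℝ A, ‖w‖ ≤ ρ → z + w ∈ A := by
  obtain ⟨z', hz', rfl⟩ := hz
  obtain ⟨ε, hε, hball⟩ := Metric.isOpen_iff.1 isOpen_interior z' hz'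
  refine ⟨ε / 2, half_pos hε, fun w hw hwn => ?_⟩
  have hmem : (z' : E) + w ∈ affineSpan ℝ A := by
    simpa [add_comm] using
      AffineSubspace.vadd_mem_of_mem_direction (by rwa [direction_affineSpan]) z'.2
  have hnear : (⟨_, hmem⟩ : affineSpan ℝ A) ∈ ball z' ε := by
    rw [mem_ball, Subtype.dist_eq, dist_eq_norm, add_sub_cancel_left]
    linarith
  exact (interior_subset (hball hnear) : (⟨_, hmem⟩ : affineSpan ℝ A) ∈ Subtype.val ⁻¹' A)

theorem exists_add_mem_of_mem_intrinsicInterior_inter {A B : Set E} {z : E}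
    (hz : z ∈ intrinsicInterior ℝ A ∩ intrinsicInterior ℝ B) :
    ∃ ρ > 0, (∀ w ∈ vectorSpan ℝ A, ‖w‖ ≤ ρ → z + w ∈ A) ∧
      ∀ w ∈ vectorSpan ℝ B, ‖w‖ ≤ ρ → z + w ∈ B := by
  obtain ⟨ρA, hρA, hballA⟩ := exists_add_mem_of_mem_intrinsicInterior hz.1
  obtain ⟨ρB, hρB, hballB⟩ := exists_add_mem_of_mem_intrinsicInterior hz.2
  exact ⟨min ρA ρB, lt_min hρA hρB, fun w hw hwρ => hballA w hw (hwρ.trans (min_le_left _ _)),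
    fun w hw hwρ => hballB w hw (hwρ.trans (min_le_right _ _))⟩

theorem mem_of_forall_add_mem {S : Set E} {W : Submodule ℝ E} {z : E} {ρ : ℝ} (hρ : 0 ≤ ρ)
    (hball : ∀ w ∈ W, ‖w‖ ≤ ρ → z + w ∈ S) : z ∈ S := by
  simpa using hball 0 W.zero_mem (by simpa using hρ)

theorem Convex.add_smul_sub_mem_of_forall_add_mem {S : Set E} {W : Submodule ℝ E} {z d m : E}
    {ρ H : ℝ} (hS : Convex ℝ S) (hball : ∀ w ∈ W, ‖w‖ ≤ ρ → z + w ∈ S) (hρ : 0 < ρ)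
    (hd : d ∈ S) (hmd : m - d ∈ W) (hH : ‖m - d‖ ≤ H) : m + (H / (H + ρ)) • (z - m) ∈ S := by
  rcases ((norm_nonneg _).trans hH).eq_or_lt with rfl | hHpos
  · rw [norm_le_zero_iff, sub_eq_zero] at hH
    simpa [hH] using hd
  -- `m + t (z - m)` is a convex combination of `d` and `z + (ρ / H) (m - d)`
  have hw : z + (ρ / H) • (m - d) ∈ S := hball _ (W.smul_mem _ hmd) <| by
    rw [norm_smul, Real.norm_of_nonneg (by positivity)]
    calc ρ / H * ‖m - d‖ ≤ ρ / H * H := by gcongr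
      _ = ρ := div_mul_cancel₀ _ hHpos.ne'
  have hsum : ρ / (H + ρ) + H / (H + ρ) = 1 := by field_simp; ring
  have hprod : H / (H + ρ) * (ρ / H) = ρ / (H + ρ) := by field_simp
  convert hS hd hw (by positivity) (by positivity) hsum using 1
  rw [smul_add, smul_smul, hprod]
  linear_combination (norm := module) hsum.symm • m

end RelativeInterior

section InnerProduct

variable {E : Type*} [NormedAddCommGroup E] [InnerProductSpace ℝ E]

theorem mul_norm_starProjection_le_neg_inner {S : Set E} {W : Submodule ℝ E}
    [W.HasOrthogonalProjection] {z d t : E} {ρ : ℝ} (hρ : 0 ≤ ρ)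
    (hball : ∀ w ∈ W, ‖w‖ ≤ ρ → z + w ∈ S) (hnormal : ∀ c ∈ S, ⟪t, c - d⟫ ≤ 0) :
    ρ * ‖W.starProjection t‖ ≤ -⟪t, z - d⟫ := by
  rcases (norm_nonneg (W.starProjection t)).eq_or_lt with h0 | hpos
  · rw [← h0, mul_zero, neg_nonneg]
    exact hnormal z (mem_of_forall_add_mem hρ hball)
  have hinner : ⟪t, W.starProjection t⟫ = ‖W.starProjection t‖ ^ 2 := by
    rw [← real_inner_self_eq_norm_sq, W.inner_starProjection_left_eq_right,
      W.starProjection_eq_self_iff.2 (W.starProjection_apply_mem t)]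
  have hw := hnormal _ <| hball ((ρ / ‖W.starProjection t‖) • W.starProjection t)
    (W.smul_mem _ (W.starProjection_apply_mem t)) <| by
      rw [norm_smul, Real.norm_of_nonneg (by positivity), div_mul_cancel₀ _ hpos.ne']
  rw [add_sub_right_comm, inner_add_right, real_inner_smul_right, hinner] at hw
  have hscale : ρ / ‖W.starProjection t‖ * ‖W.starProjection t‖ ^ 2 = ρ * ‖W.starProjection t‖ := by
    field_simp
  linarith

variable [FiniteDimensional ℝ E]

/-- Bounded linear regularity of `A` and `B`. -/
theorem exists_mem_inter_norm_sub_le {A B : Set E} {z : E} {ρ R : ℝ} (hA : Convex ℝ A)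
    (hB : Convex ℝ B) (hρ : 0 < ρ) (hR : 0 ≤ R)
    (hballA : ∀ w ∈ vectorSpan ℝ A, ‖w‖ ≤ ρ → z + w ∈ A)
    (hballB : ∀ w ∈ vectorSpan ℝ B, ‖w‖ ≤ ρ → z + w ∈ B) :
    ∃ κ, 0 ≤ κ ∧ ∀ y a b, a ∈ A → b ∈ B → ‖y - z‖ ≤ R →
      ∃ c ∈ A ∩ B, ‖y - c‖ ≤ κ * (‖y - a‖ + ‖y - b‖) := by
  obtain ⟨C, hC, hreg⟩ :=
    Submodule.exists_norm_sub_starProjection_inf_le (vectorSpan ℝ A) (vectorSpan ℝ B)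
  refine ⟨C + (C + 1) * R / ρ, by positivity, fun y a b ha hb hyz => ?_⟩
  have hzA : z ∈ A := mem_of_forall_add_mem hρ.le hballA
  have hzB : z ∈ B := mem_of_forall_add_mem hρ.le hballB
  set P := (vectorSpan ℝ A ⊓ vectorSpan ℝ B).starProjection
  set δ := ‖y - a‖ + ‖y - b‖
  -- `m` lies in both affine hulls, close to `y`
  set m := z + P (y - z)
  have hym : ‖y - m‖ ≤ C * δ := by
    simpa [m, sub_sub, δ] using
      hreg (y - z) (a - z) (vsub_mem_vectorSpan ℝ ha hzA) (b - z) (vsub_mem_vectorSpan ℝ hb hzB)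
  have hnear : ∀ {S : Set E} {d : E}, d ∈ S → z ∈ S →
      vectorSpan ℝ A ⊓ vectorSpan ℝ B ≤ vectorSpan ℝ S → ‖y - d‖ ≤ δ →
      m - d ∈ vectorSpan ℝ S ∧ ‖m - d‖ ≤ (C + 1) * δ := fun {S d} hd hz hle hyd => by
    refine ⟨?_, ?_⟩
    · rw [show m - d = P (y - z) - (d - z) by simp only [m]; abel]
      exact sub_mem (hle (Submodule.starProjection_apply_mem _ _)) (vsub_mem_vectorSpan ℝ hd hz)
    · calc ‖m - d‖ ≤ ‖m - y‖ + ‖y - d‖ := norm_sub_le_norm_sub_add_norm_sub _ _ _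
        _ ≤ C * δ + δ := by rw [norm_sub_rev]; gcongr
        _ = (C + 1) * δ := by ring
  obtain ⟨hmaA, hma⟩ := hnear ha hzA inf_le_left (le_add_of_nonneg_right (norm_nonneg _))
  obtain ⟨hmbB, hmb⟩ := hnear hb hzB inf_le_right (le_add_of_nonneg_left (norm_nonneg _))
  set H := (C + 1) * δ
  refine ⟨m + (H / (H + ρ)) • (z - m), ⟨hA.add_smul_sub_mem_of_forall_add_mem hballA hρ ha hmaA hma,
    hB.add_smul_sub_mem_of_forall_add_mem hballB hρ hb hmbB hmb⟩, ?_⟩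
  have hzm : ‖z - m‖ ≤ R := by
    rw [show z - m = -P (y - z) by simp only [m]; abel, norm_neg]
    exact (Submodule.norm_starProjection_apply_le _ _).trans hyz
  have hH : 0 ≤ H := by positivity
  calc ‖y - (m + (H / (H + ρ)) • (z - m))‖ ≤ ‖y - m‖ + H / (H + ρ) * ‖z - m‖ := by
        rw [← sub_sub]
        refine (norm_sub_le _ _).trans_eq ?_
        rw [norm_smul, Real.norm_of_nonneg (by positivity)]
    _ ≤ C * δ + H / ρ * R := by
        gcongr
        · linarith
    _ = (C + (C + 1) * R / ρ) * δ := by ring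

end InnerProduct

section DouglasRachfordProperties

variable {E : Type*} [NormedAddCommGroup E] [InnerProductSpace ℝ E] {A B : Set E}
  {PA PB PL T : E → E}

theorem douglasRachford_apply_eq_self (hA : Convex ℝ A) (hB : Convex ℝ B)
    (hPA : IsMetricProj A PA) (hPB : IsMetricProj B PB)
    (hPL : IsMetricProj (affineSpan ℝ (A ∪ B) : Set E) PL)
    (hT : ∀ x, T x = PB ((2 : ℝ) • PA x - x) + x - PA x) {w : E} (hwA : PL w ∈ A)
    (hwB : PL w ∈ B) : T w = w := by
  have hAL : A ⊆ affineSpan ℝ (A ∪ B) := Set.subset_union_left.trans (subset_affineSpan ℝ _)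
  have hBL : B ⊆ affineSpan ℝ (A ∪ B) := Set.subset_union_right.trans (subset_affineSpan ℝ _)
  have horth := hPL.sub_mem_orthogonal_direction w
  have hPAw : PA w = PL w := hPA.eq_of_sub_mem_orthogonal_direction hA hAL hwA horth
  have hPBw : PB ((2 : ℝ) • PL w - w) = PL w := by
    refine hPB.eq_of_sub_mem_orthogonal_direction hB hBL hwB ?_
    rw [show (2 : ℝ) • PL w - w - PL w = -(w - PL w) by module]
    exact neg_mem horth
  rw [hT, hPAw, hPBw]
  abel

theorem douglasRachford_sub_proj_affine_eq (hPA : IsMetricProj A PA) (hPB : IsMetricProj B PB)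
    (hPL : IsMetricProj (affineSpan ℝ (A ∪ B) : Set E) PL)
    (hT : ∀ x, T x = PB ((2 : ℝ) • PA x - x) + x - PA x) (x : E) :
    T x - PL (T x) = x - PL x := by
  have hstep : T x - x ∈ (affineSpan ℝ (A ∪ B)).direction := by
    rw [hT, show PB ((2 : ℝ) • PA x - x) + x - PA x - x = PB ((2 : ℝ) • PA x - x) -ᵥ PA x by
      rw [vsub_eq_sub]; abel]
    exact AffineSubspace.vsub_mem_direction
      (subset_affineSpan ℝ _ (Or.inr (hPB.mem _))) (subset_affineSpan ℝ _ (Or.inl (hPA.mem x)))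
  rw [show T x = x + (T x - x) by abel, hPL.add_of_mem_direction x hstep]
  abel

theorem douglasRachford_sub_proj_affine_eq_of_tendsto (hPA : IsMetricProj A PA)
    (hPB : IsMetricProj B PB) (hPL : IsMetricProj (affineSpan ℝ (A ∪ B) : Set E) PL)
    (hT : ∀ x, T x = PB ((2 : ℝ) • PA x - x) + x - PA x) {xs : ℕ → E}
    (hiter : ∀ n, xs (n + 1) = T (xs n)) {xbar : E} (hlim : Tendsto xs atTop (𝓝 xbar)) :
    xbar - PL xbar = xs 0 - PL (xs 0) := by
  have hconst : ∀ n, xs n - PL (xs n) = xs 0 - PL (xs 0) := fun n => by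
    induction n with
    | zero => rfl
    | succ n ih => rw [hiter, douglasRachford_sub_proj_affine_eq hPA hPB hPL hT, ih]
  refine tendsto_nhds_unique
    (((continuous_id.sub (hPL.continuous (AffineSubspace.convex _))).tendsto xbar).comp hlim) ?_
  simpa only [Function.comp_def, Pi.sub_apply, id_eq, hconst] using
    (tendsto_const_nhds : Tendsto (fun _ : ℕ => xs 0 - PL (xs 0)) atTop _)

theorem douglasRachford_mul_norm_starProjection_le [FiniteDimensional ℝ E] (hA : Convex ℝ A)
    (hB : Convex ℝ B) (hPA : IsMetricProj A PA) (hPB : IsMetricProj B PB)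
    (hT : ∀ x, T x = PB ((2 : ℝ) • PA x - x) + x - PA x) {z : E} {ρ : ℝ} (hρ : 0 ≤ ρ)
    (hballA : ∀ w ∈ vectorSpan ℝ A, ‖w‖ ≤ ρ → z + w ∈ A)
    (hballB : ∀ w ∈ vectorSpan ℝ B, ‖w‖ ≤ ρ → z + w ∈ B) (x : E) :
    ρ * ‖(vectorSpan ℝ A).starProjection (x - PA x)‖ ≤ ‖x - z‖ * ‖x - T x‖ ∧
      ρ * ‖(vectorSpan ℝ B).starProjection
        ((2 : ℝ) • PA x - x - PB ((2 : ℝ) • PA x - x))‖ ≤ ‖x - z‖ * ‖x - T x‖ := by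
  set a := PA x
  set b := PB ((2 : ℝ) • a - x)
  have hzA : z ∈ A := mem_of_forall_add_mem hρ hballA
  have hzB : z ∈ B := mem_of_forall_add_mem hρ hballB
  have hu := hPA.inner_le_zero hA x z hzA
  have hv := hPB.inner_le_zero hB ((2 : ℝ) • a - x) z hzB
  have hres : x - T x = a - b := by rw [hT]; abel
  have hsum : ⟪x - a, z - a⟫ + ⟪(2 : ℝ) • a - x - b, z - b⟫
      = ⟪a - b, z - x⟫ + ‖a - b‖ ^ 2 := by
    rw [show z - a = (z - x) + (x - a) by abel, show z - b = (z - x) + (x - a) + (a - b) by abel,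
      show (2 : ℝ) • a - x - b = (a - b) - (x - a) by module]
    generalize x - a = u
    generalize a - b = d
    simp only [inner_add_right, inner_sub_left, real_inner_self_eq_norm_sq, real_inner_comm u d]
    ring
  have hCS : -⟪a - b, z - x⟫ ≤ ‖x - z‖ * ‖x - T x‖ := by
    rw [hres, ← neg_sub x z, inner_neg_right, neg_neg, mul_comm]
    exact real_inner_le_norm _ _
  have hsq := sq_nonneg ‖a - b‖
  exact ⟨(mul_norm_starProjection_le_neg_inner hρ hballA (hPA.inner_le_zero hA x)).trans
      (by linarith),
    (mul_norm_starProjection_le_neg_inner hρ hballB (hPB.inner_le_zero hB _)).trans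
      (by linarith)⟩

end DouglasRachfordProperties

section DouglasRachfordConvergence

variable {E : Type*} [NormedAddCommGroup E] [InnerProductSpace ℝ E] [FiniteDimensional ℝ E]
  {A B : Set E} {PA PB PL T : E → E} {z : E} {ρ : ℝ}

/-- The normal `x - P_A x` lies in `N_A(P_A x) ∩ -N_B(P_A x)`, which is orthogonal to `L` because
`z` is relatively interior to both sets. -/
theorem douglasRachford_proj_eq_of_apply_eq_self (hA : Convex ℝ A) (hB : Convex ℝ B)
    (hPA : IsMetricProj A PA) (hPB : IsMetricProj B PB)
    (hPL : IsMetricProj (affineSpan ℝ (A ∪ B) : Set E) PL)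
    (hT : ∀ x, T x = PB ((2 : ℝ) • PA x - x) + x - PA x) (hρ : 0 < ρ)
    (hballA : ∀ w ∈ vectorSpan ℝ A, ‖w‖ ≤ ρ → z + w ∈ A)
    (hballB : ∀ w ∈ vectorSpan ℝ B, ‖w‖ ≤ ρ → z + w ∈ B) {x : E} (hx : T x = x) :
    PA x ∈ B ∧ PB x = PA x ∧ PL x = PA x := by
  set a := PA x
  have hzA : z ∈ A := mem_of_forall_add_mem hρ.le hballA
  have hzB : z ∈ B := mem_of_forall_add_mem hρ.le hballB
  have hPBa : PB ((2 : ℝ) • a - x) = a := by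
    have h := hT x
    rw [hx] at h
    linear_combination (norm := abel) -h
  have hnA := hPA.inner_le_zero hA x
  have hnB : ∀ c ∈ B, ⟪-(x - a), c - a⟫ ≤ 0 := fun c hc => by
    simpa [hPBa, show (2 : ℝ) • a - x - a = -(x - a) by module] using
      hPB.inner_le_zero hB ((2 : ℝ) • a - x) c hc
  have hz : ⟪x - a, z - a⟫ = 0 := by
    have h := hnB z hzB
    rw [inner_neg_left] at h
    exact le_antisymm (hnA z hzA) (by linarith)
  have horthW : ∀ {S : Set E} {n : E}, (∀ w ∈ vectorSpan ℝ S, ‖w‖ ≤ ρ → z + w ∈ S) →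
      (∀ c ∈ S, ⟪n, c - a⟫ ≤ 0) → ⟪n, z - a⟫ = 0 → n ∈ (vectorSpan ℝ S)ᗮ :=
    fun hball hn hnz => by
      have h := mul_norm_starProjection_le_neg_inner hρ.le hball hn
      rw [hnz, neg_zero, mul_nonpos_iff_pos_imp_nonpos] at h
      exact (Submodule.starProjection_apply_eq_zero_iff _).1 (norm_le_zero_iff.1 (h.1 hρ))
  have horth : x - a ∈ (affineSpan ℝ (A ∪ B)).directionᗮ := by
    rw [AffineSubspace.direction_affineSpan_union hzA hzB, ← Submodule.inf_orthogonal]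
    exact ⟨horthW hballA hnA hz,
      neg_mem_iff.1 (horthW hballB hnB (by rw [inner_neg_left, hz, neg_zero]))⟩
  have hBL : B ⊆ affineSpan ℝ (A ∪ B) := Set.subset_union_right.trans (subset_affineSpan ℝ _)
  have haB : a ∈ B := hPBa ▸ hPB.mem _
  exact ⟨haB, hPB.eq_of_sub_mem_orthogonal_direction hB hBL haB horth,
    hPL.eq_of_sub_mem_orthogonal_direction (AffineSubspace.convex _) le_rfl (hBL haB) horth⟩

theorem douglasRachford_norm_proj_affine_sub_le (hA : Convex ℝ A) (hB : Convex ℝ B)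
    (hPA : IsMetricProj A PA) (hPB : IsMetricProj B PB)
    (hPL : IsMetricProj (affineSpan ℝ (A ∪ B) : Set E) PL)
    (hT : ∀ x, T x = PB ((2 : ℝ) • PA x - x) + x - PA x) (hρ : 0 < ρ)
    (hballA : ∀ w ∈ vectorSpan ℝ A, ‖w‖ ≤ ρ → z + w ∈ A)
    (hballB : ∀ w ∈ vectorSpan ℝ B, ‖w‖ ≤ ρ → z + w ∈ B) {M : ℝ} (hM : 0 ≤ M) :
    ∃ C, 0 ≤ C ∧ ∀ x, ‖x - z‖ ≤ M → ‖PL x - PA x‖ ≤ C * ‖x - T x‖ := by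
  have hzA : z ∈ A := mem_of_forall_add_mem hρ.le hballA
  have hzB : z ∈ B := mem_of_forall_add_mem hρ.le hballB
  have hdir := AffineSubspace.direction_affineSpan_union hzA hzB
  obtain ⟨C, hC, hsup⟩ :=
    Submodule.exists_norm_starProjection_sup_le (vectorSpan ℝ A) (vectorSpan ℝ B)
  refine ⟨C * (1 + 2 * (M / ρ)), by positivity, fun x hx => ?_⟩
  set r := (2 : ℝ) • PA x - x
  have hres : x - PA x + (r - PB r) = x - T x := by rw [hT]; module
  have hresL : x - T x ∈ vectorSpan ℝ A ⊔ vectorSpan ℝ B := by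
    rw [← hdir, show x - T x = PA x -ᵥ PB r by rw [hT, vsub_eq_sub]; abel]
    exact AffineSubspace.vsub_mem_direction
      (subset_affineSpan ℝ _ (Or.inl (hPA.mem x))) (subset_affineSpan ℝ _ (Or.inr (hPB.mem r)))
  obtain ⟨hnA, hnB⟩ := douglasRachford_mul_norm_starProjection_le hA hB hPA hPB hT hρ.le hballA
    hballB x
  have htan : ∀ t : ℝ, ρ * t ≤ ‖x - z‖ * ‖x - T x‖ → t ≤ M / ρ * ‖x - T x‖ := fun t ht => by
    rw [div_mul_eq_mul_div, le_div_iff₀ hρ, mul_comm]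
    exact ht.trans (by gcongr)
  rw [hPL.eq_add_starProjection x (subset_affineSpan ℝ _ (Or.inl (hPA.mem x))), add_sub_cancel_left]
  calc ‖(affineSpan ℝ (A ∪ B)).direction.starProjection (x - PA x)‖
      ≤ C * (‖x - T x‖ + ‖(vectorSpan ℝ A).starProjection (x - PA x)‖
          + ‖(vectorSpan ℝ B).starProjection (r - PB r)‖) := by
        have h := hsup _ _ (hres ▸ hresL)
        rw [hres] at h
        simpa only [hdir] using h
    _ ≤ C * (‖x - T x‖ + M / ρ * ‖x - T x‖ + M / ρ * ‖x - T x‖) := by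
        gcongr
        exacts [htan _ hnA, htan _ hnB]
    _ = C * (1 + 2 * (M / ρ)) * ‖x - T x‖ := by ring

theorem douglasRachford_infDist_le (hA : Convex ℝ A) (hB : Convex ℝ B)
    (hPA : IsMetricProj A PA) (hPB : IsMetricProj B PB)
    (hPL : IsMetricProj (affineSpan ℝ (A ∪ B) : Set E) PL)
    (hT : ∀ x, T x = PB ((2 : ℝ) • PA x - x) + x - PA x) (hρ : 0 < ρ)
    (hballA : ∀ w ∈ vectorSpan ℝ A, ‖w‖ ≤ ρ → z + w ∈ A)
    (hballB : ∀ w ∈ vectorSpan ℝ B, ‖w‖ ≤ ρ → z + w ∈ B) {M : ℝ} (hM : 0 ≤ M) :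
    ∃ c, 1 ≤ c ∧ ∀ x, ‖x - z‖ ≤ M →
      infDist x {w | PL w ∈ A ∧ PL w ∈ B} ≤ c * ‖x - T x‖ := by
  obtain ⟨C, hC, hproj⟩ :=
    douglasRachford_norm_proj_affine_sub_le hA hB hPA hPB hPL hT hρ hballA hballB hM
  obtain ⟨κ, hκ, hreg⟩ := exists_mem_inter_norm_sub_le hA hB hρ hM hballA hballB
  refine ⟨max 1 (κ * (2 * C + 1)), le_max_left _ _, fun x hx => ?_⟩
  set r := (2 : ℝ) • PA x - x
  have hzA : z ∈ A := mem_of_forall_add_mem hρ.le hballA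
  have hzL : z ∈ affineSpan ℝ (A ∪ B) := subset_affineSpan ℝ _ (Or.inl hzA)
  have hya := hproj x hx
  have hyb : ‖PL x - PB r‖ ≤ (C + 1) * ‖x - T x‖ := by
    calc ‖PL x - PB r‖ ≤ ‖PL x - PA x‖ + ‖PA x - PB r‖ := norm_sub_le_norm_sub_add_norm_sub _ _ _
      _ = ‖PL x - PA x‖ + ‖x - T x‖ := by rw [hT]; congr 2; abel
      _ ≤ (C + 1) * ‖x - T x‖ := by linarith
  have hyz : ‖PL x - z‖ ≤ M := by
    simpa only [hPL.apply_eq_self hzL] using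
      (hPL.norm_sub_le (AffineSubspace.convex _) x z).trans hx
  obtain ⟨c, ⟨hcA, hcB⟩, hyc⟩ := hreg (PL x) (PA x) (PB r) (hPA.mem x) (hPB.mem r) hyz
  -- move `c ∈ A ∩ B` back off `L` by the normal component of `x`
  have hPLc : PL (x - PL x + c) = c :=
    hPL.eq_of_sub_mem_orthogonal_direction (AffineSubspace.convex _) le_rfl
      (subset_affineSpan ℝ _ (Or.inl hcA)) (by simpa using hPL.sub_mem_orthogonal_direction x)
  calc infDist x {w | PL w ∈ A ∧ PL w ∈ B} ≤ dist x (x - PL x + c) :=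
        infDist_le_dist_of_mem (by simpa [hPLc] using ⟨hcA, hcB⟩)
    _ = ‖PL x - c‖ := by rw [dist_eq_norm]; congr 1; abel
    _ ≤ κ * (C * ‖x - T x‖ + (C + 1) * ‖x - T x‖) := hyc.trans (by gcongr)
    _ = κ * (2 * C + 1) * ‖x - T x‖ := by ring
    _ ≤ max 1 (κ * (2 * C + 1)) * ‖x - T x‖ := by gcongr; exact le_max_right _ _

theorem douglasRachford_exists_tendsto_geometric (hA : Convex ℝ A) (hB : Convex ℝ B)
    (hPA : IsMetricProj A PA) (hPB : IsMetricProj B PB)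
    (hPL : IsMetricProj (affineSpan ℝ (A ∪ B) : Set E) PL)
    (hT : ∀ x, T x = PB ((2 : ℝ) • PA x - x) + x - PA x) (hρ : 0 < ρ)
    (hballA : ∀ w ∈ vectorSpan ℝ A, ‖w‖ ≤ ρ → z + w ∈ A)
    (hballB : ∀ w ∈ vectorSpan ℝ B, ‖w‖ ≤ ρ → z + w ∈ B) {xs : ℕ → E}
    (hiter : ∀ n, xs (n + 1) = T (xs n)) :
    ∃ xbar, Tendsto xs atTop (𝓝 xbar) ∧
      ∃ C, 0 ≤ C ∧ ∃ κ ∈ Set.Ico (0 : ℝ) 1, ∀ n, ‖xs n - xbar‖ ≤ C * κ ^ n := by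
  set F := {w | PL w ∈ A ∧ PL w ∈ B}
  have hfirm := firmlyNonexpansive_douglasRachford hA hB hPA hPB hT
  have hfix : ∀ w ∈ F, T w = w := fun w hw =>
    douglasRachford_apply_eq_self hA hB hPA hPB hPL hT hw.1 hw.2
  have hzA := mem_of_forall_add_mem hρ.le hballA
  have hzF : z ∈ F := by
    show PL z ∈ A ∧ PL z ∈ B
    rw [hPL.apply_eq_self (subset_affineSpan ℝ _ (Or.inl hzA))]
    exact ⟨hzA, mem_of_forall_add_mem hρ.le hballB⟩
  obtain ⟨c, hc, hbound⟩ :=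
    douglasRachford_infDist_le hA hB hPA hPB hPL hT hρ hballA hballB (norm_nonneg (xs 0 - z))
  simpa only [dist_eq_norm] using
    exists_tendsto_of_sq_add_sq_le (xs := xs) (D := fun n => infDist (xs n) F) hc
      (fun _ => infDist_nonneg)
      (fun n => by
        simpa only [hiter, dist_eq_norm] using hfirm.infDist_sq_add_norm_sq_le ⟨z, hzF⟩ hfix (xs n))
      (fun n => by
        simpa only [hiter, dist_eq_norm] using
          hbound (xs n) (hfirm.norm_sub_fixedPoint_le hiter (hfix z hzF) n))

end DouglasRachfordConvergence

theorem DR_global_linear_convergence_convex_general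
    (A B : Set X)
    (hAcv : Convex ℝ A) (hBcv : Convex ℝ B)
    (hri : (intrinsicInterior ℝ A ∩ intrinsicInterior ℝ B).Nonempty)
    (PA PB PL : X → X) (hPA : ∀ x, projSet A x = {PA x}) (hPB : ∀ x, projSet B x = {PB x})
    (hPL : ∀ x, projSet ((affineSpan ℝ (A ∪ B) : AffineSubspace ℝ X) : Set X) x = {PL x})
    (T : X → X) (hT : ∀ x, T x = PB ((2:ℝ) • PA x - x) + x - PA x)
    (x₀ : X) (xs : ℕ → X) (hx0 : xs 0 = x₀) (hiter : ∀ n, xs (n + 1) = T (xs n)) :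
    ∃ xbar : X, T xbar = xbar ∧
      (∃ C : ℝ, 0 ≤ C ∧ ∃ κ ∈ Set.Ico (0:ℝ) 1, ∀ n, ‖xs n - xbar‖ ≤ C * κ ^ n) ∧
      Tendsto xs atTop (𝓝 xbar) ∧
      PA xbar = PB xbar ∧ PA xbar = xbar - (x₀ - PL x₀) ∧ PA xbar ∈ A ∩ B := by
  obtain ⟨z, hz⟩ := hri
  obtain ⟨ρ, hρ, hballA, hballB⟩ := exists_add_mem_of_mem_intrinsicInterior_inter hz
  obtain ⟨xbar, hlim, hrate⟩ := douglasRachford_exists_tendsto_geometric hAcv hBcv hPA hPB hPL hT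
    hρ hballA hballB hiter
  have hxbar : T xbar = xbar :=
    (firmlyNonexpansive_douglasRachford hAcv hBcv hPA hPB hT).continuous.apply_eq_of_tendsto
      hiter hlim
  obtain ⟨hB, hPBxbar, hPLxbar⟩ := douglasRachford_proj_eq_of_apply_eq_self hAcv hBcv hPA hPB
    hPL hT hρ hballA hballB hxbar
  have hshadow := douglasRachford_sub_proj_affine_eq_of_tendsto hPA hPB hPL hT hiter hlim
  rw [hx0] at hshadow
  refine ⟨xbar, hxbar, hrate, hlim, hPBxbar.symm, ?_, IsMetricProj.mem hPA xbar, hB⟩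
  rw [← hPLxbar, ← hshadow, sub_sub_cancel]

theorem DR_global_linear_convergence_convex
    (A B : Set X) (hAc : IsClosed A) (hBc : IsClosed B)
    (hAcv : Convex ℝ A) (hBcv : Convex ℝ B)
    (hAne : A.Nonempty) (hBne : B.Nonempty)
    (hri : (intrinsicInterior ℝ A ∩ intrinsicInterior ℝ B).Nonempty)
    (PA PB PL : X → X) (hPA : ∀ x, projSet A x = {PA x}) (hPB : ∀ x, projSet B x = {PB x})
    (hPL : ∀ x, projSet ((affineSpan ℝ (A ∪ B) : AffineSubspace ℝ X) : Set X) x = {PL x})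
    (T : X → X) (hT : ∀ x, T x = PB ((2:ℝ) • PA x - x) + x - PA x)
    (x₀ : X) (xs : ℕ → X) (hx0 : xs 0 = x₀) (hiter : ∀ n, xs (n + 1) = T (xs n)) :
    ∃ xbar : X, T xbar = xbar ∧
      (∃ C : ℝ, 0 ≤ C ∧ ∃ κ ∈ Set.Ico (0:ℝ) 1, ∀ n, ‖xs n - xbar‖ ≤ C * κ ^ n) ∧
      Tendsto xs atTop (𝓝 xbar) ∧
      PA xbar = PB xbar ∧ PA xbar = xbar - (x₀ - PL x₀) ∧ PA xbar ∈ A ∩ B :=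
  DR_global_linear_convergence_convex_general A B hAcv hBcv hri PA PB PL hPA hPB hPL T hT x₀ xs hx0
    hiter
end

section
/- Let A = ℝ × ℝ₊ and B = {(x₁,x₂) ∈ ℝ² : x₂ ≤ −x₁²}, and let T be the Douglas–Rachford operator for A and B. Then the point x₀ = (0,−1) is a fixed point of T, yet P_A(x₀) = (0,0) ≠ P_B(x₀) = (0,−1); in particular, for a fixed point x̄ of T the projections P_A x̄ and P_B x̄ need not coincide. -/
open Metric Filter
open scoped Topology

variable {X : Type*} [NormedAddCommGroup X] [InnerProductSpace ℝ X] [FiniteDimensional ℝ X]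

/-!
With `o = (0,0)`: `x₀ ∈ B` projects onto itself, while `x₀ - o = (0,-1)` and `2o - x₀ - o = (0,1)`
satisfy the variational inequalities `⟪x₀ - o, c - o⟫ = -c₂ ≤ 0` on `A` and `⟪o - x₀, c - o⟫ = c₂ ≤ 0`
on `B`, so `o ∈ P_A x₀` and `o ∈ P_B (2o - x₀)`. These two memberships say exactly that `x₀` is a
fixed point of `T`, and convexity of `A` makes `P_A x₀ = {o}`.
-/

section ProjSet

variable {E : Type*} [NormedAddCommGroup E]

theorem projSet_eq_singleton_of_mem {C : Set E} {x : E} (hx : x ∈ C) : projSet C x = {x} := by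
  ext a
  constructor
  · rintro ⟨-, hmin⟩
    have hdist : ‖x - a‖ ≤ 0 := by simpa using hmin x hx
    exact (sub_eq_zero.mp (norm_le_zero_iff.mp hdist)).symm
  · rintro rfl
    exact ⟨hx, fun c _ => by simp⟩

variable [InnerProductSpace ℝ E]

theorem mem_projSet_of_inner_le_zero {C : Set E} {x a : E} (ha : a ∈ C)
    (hvar : ∀ c ∈ C, inner ℝ (x - a) (c - a) ≤ 0) : a ∈ projSet C x := by
  refine ⟨ha, fun c hc => ?_⟩
  have hsplit : x - c = (x - a) - (c - a) := by abel
  have hsq : ‖x - a‖ ^ 2 ≤ ‖x - c‖ ^ 2 := by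
    rw [hsplit, norm_sub_sq_real (x - a) (c - a)]
    nlinarith [hvar c hc, sq_nonneg ‖c - a‖]
  exact (sq_le_sq₀ (norm_nonneg _) (norm_nonneg _)).mp hsq

theorem inner_le_zero_of_mem_projSet {C : Set E} (hC : Convex ℝ C) {x a : E}
    (ha : a ∈ projSet C x) : ∀ c ∈ C, inner ℝ (x - a) (c - a) ≤ 0 := by
  have : Nonempty C := ⟨⟨a, ha.1⟩⟩
  refine (norm_eq_iInf_iff_real_inner_le_zero hC ha.1).mp (le_antisymm ?_ ?_)
  · exact le_ciInf fun c => ha.2 c c.2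
  · exact ciInf_le (f := fun c : C => ‖x - c‖) ⟨0, by rintro _ ⟨c, rfl⟩; exact norm_nonneg _⟩
      ⟨a, ha.1⟩

theorem projSet_subsingleton {C : Set E} (hC : Convex ℝ C) (x : E) : (projSet C x).Subsingleton := by
  intro a ha b hb
  have hab := inner_le_zero_of_mem_projSet hC ha b hb.1
  have hba := inner_le_zero_of_mem_projSet hC hb a ha.1
  have hsum : inner ℝ (a - b) (a - b) = inner ℝ (x - a) (b - a) + inner ℝ (x - b) (a - b) := by
    rw [show x - b = (x - a) + (a - b) by abel, inner_add_left, ← neg_sub a b, inner_neg_right]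
    ring
  have hnorm : ‖a - b‖ ^ 2 ≤ 0 := by
    rw [← real_inner_self_eq_norm_sq, hsum]; linarith
  exact sub_eq_zero.mp (norm_eq_zero.mp (by nlinarith [norm_nonneg (a - b)]))

theorem self_mem_DRop_iff {A B : Set E} {x : E} :
    x ∈ DRop A B x ↔ ∃ a ∈ projSet A x, a ∈ projSet B ((2:ℝ) • a - x) := by
  constructor
  · rintro ⟨a, ha, b, hb, hx⟩
    obtain rfl : b = a := by
      rw [add_sub_right_comm, eq_comm, add_eq_right, sub_eq_zero] at hx
      exact hx
    exact ⟨b, ha, hb⟩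
  · rintro ⟨a, ha, hb⟩
    exact ⟨a, ha, a, hb, by abel⟩

end ProjSet

theorem EuclideanSpace.inner_fin_two (u v : EuclideanSpace ℝ (Fin 2)) :
    inner ℝ u v = u 0 * v 0 + u 1 * v 1 := by
  simp only [PiLp.inner_apply, Fin.sum_univ_two, RCLike.inner_apply, conj_trivial]
  ring

theorem convex_upperHalfPlane : Convex ℝ {p : EuclideanSpace ℝ (Fin 2) | 0 ≤ p 1} := by
  intro x hx y hy s t hs ht _
  simp only [Set.mem_ofPred_eq, PiLp.add_apply, PiLp.smul_apply, smul_eq_mul] at hx hy ⊢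
  positivity

theorem DR_fixed_point_shadows_may_differ
    (A B : Set (EuclideanSpace ℝ (Fin 2)))
    (hA : A = {p | 0 ≤ p 1}) (hB : B = {p | p 1 ≤ -(p 0) ^ 2})
    (x₀ o : EuclideanSpace ℝ (Fin 2))
    (hx₀ : x₀ 0 = 0 ∧ x₀ 1 = -1) (ho : o 0 = 0 ∧ o 1 = 0) :
    x₀ ∈ DRop A B x₀ ∧ projSet A x₀ = {o} ∧ projSet B x₀ = {x₀} ∧ o ≠ x₀ := by
  subst hA hB
  obtain ⟨hx0, hx1⟩ := hx₀
  obtain ⟨ho0, ho1⟩ := ho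
  have hoA : o ∈ projSet {p | 0 ≤ p 1} x₀ := by
    refine mem_projSet_of_inner_le_zero (by simp [ho1]) fun c hc => ?_
    simpa [EuclideanSpace.inner_fin_two, hx0, hx1, ho0, ho1] using hc
  have hoB : o ∈ projSet {p | p 1 ≤ -(p 0) ^ 2} ((2:ℝ) • o - x₀) := by
    refine mem_projSet_of_inner_le_zero (by simp [ho0, ho1]) fun c hc => ?_
    simp only [Set.mem_ofPred_eq] at hc
    simp only [EuclideanSpace.inner_fin_two, PiLp.sub_apply, PiLp.smul_apply, smul_eq_mul,
      hx0, hx1, ho0, ho1]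
    nlinarith [sq_nonneg (c 0)]
  refine ⟨self_mem_DRop_iff.mpr ⟨o, hoA, hoB⟩,
    (projSet_subsingleton convex_upperHalfPlane x₀).eq_singleton_of_mem hoA,
    projSet_eq_singleton_of_mem (by simp [hx0, hx1]),
    fun h => by simpa [ho1, hx1] using congrArg (· 1) h⟩
end

section
/- Let A and B be two distinct lines through the origin in ℝ³ spanning a 2-dimensional plane L = aff(A ∪ B), intersecting only at w = 0. Then {A,B} is affine-hull regular at w (N_A^L(w) ∩ (−N_B^L(w)) = {0}, where N_C^L(w) := N_C(w) ∩ (L − w)), but {A,B} is not strongly regular at w (N_A(w) ∩ (−N_B(w)) ≠ {0}). -/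
open Metric Filter
open scoped Topology

variable {X : Type*} [NormedAddCommGroup X] [InnerProductSpace ℝ X] [FiniteDimensional ℝ X]

/-!
The metric projection onto a subspace `K` is the orthogonal projection, so the proximal and the
limiting normal cones of `K` at any of its points are both `Kᗮ`. For the lines `A`, `B` the
unrestricted cones therefore meet in `Aᗮ ∩ Bᗮ = (A + B)ᗮ`, which is nonzero since
`dim (A + B) ≤ 2 < 3`; restricting to `L ⊆ A + B` cuts this down to `(A + B)ᗮ ∩ (A + B) = {0}`.
-/

namespace Submodule

variable {E : Type*} [NormedAddCommGroup E] [InnerProductSpace ℝ E] (K : Submodule ℝ E)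

theorem mem_projSet_iff {x z : E} : x ∈ projSet K z ↔ x ∈ K ∧ z - x ∈ Kᗮ := by
  have hbdd : BddBelow (Set.range fun w : (K : Set E) => ‖z - w‖) :=
    ⟨0, by rintro _ ⟨w, rfl⟩; positivity⟩
  rw [mem_orthogonal']
  refine ⟨fun ⟨hx, hmin⟩ => ⟨hx, ?_⟩, fun ⟨hx, horth⟩ => ⟨hx, fun c hc => ?_⟩⟩
  · refine (norm_eq_iInf_iff_real_inner_eq_zero K hx).mp (le_antisymm ?_ (ciInf_le hbdd ⟨x, hx⟩))
    exact le_ciInf fun w => hmin w w.2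
  · rw [(norm_eq_iInf_iff_real_inner_eq_zero K hx).mpr horth]
    exact ciInf_le hbdd ⟨c, hc⟩

theorem proxNormalCone_eq_orthogonal {x : E} (hx : x ∈ K) :
    proxNormalCone K x = (Kᗮ : Set E) := by
  ext u
  constructor
  · rintro ⟨t, -, z, hz, rfl⟩
    exact Kᗮ.smul_mem t (K.mem_projSet_iff.mp hz).2
  · intro hu
    exact ⟨1, zero_le_one, x + u, K.mem_projSet_iff.mpr ⟨hx, by simpa using hu⟩, by simp⟩

theorem limNormalCone_eq_orthogonal {w : E} (hw : w ∈ K) :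
    limNormalCone K w = (Kᗮ : Set E) := by
  ext u
  constructor
  · rintro ⟨xs, us, hxs, hus, -, hlim⟩
    refine K.isClosed_orthogonal.mem_of_tendsto hlim (Eventually.of_forall fun n => ?_)
    rw [← K.proxNormalCone_eq_orthogonal (hxs n)]
    exact hus n
  · intro hu
    refine ⟨fun _ => w, fun _ => u, fun _ => hw, fun _ => ?_, tendsto_const_nhds,
      tendsto_const_nhds⟩
    rwa [K.proxNormalCone_eq_orthogonal hw]

variable (U V : Submodule ℝ E)

theorem coe_affineSpan_union_subset_sup :
    (affineSpan ℝ ((U : Set E) ∪ V) : Set E) ⊆ (U ⊔ V : Submodule ℝ E) := by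
  have h := affineSpan_le_toAffineSubspace_span (k := ℝ) (s := (U : Set E) ∪ V)
  rwa [span_union, span_eq, span_eq] at h

theorem coe_orthogonal_inter_neg_orthogonal :
    (Uᗮ : Set E) ∩ -(Vᗮ : Set E) = ((U ⊔ V)ᗮ : Set E) := by
  rw [neg_coe, ← inf_orthogonal, coe_inf]

theorem orthogonal_inter_neg_orthogonal_inter_eq_zero {L : Set E}
    (hL : L ⊆ (U ⊔ V : Submodule ℝ E)) (h0 : (0 : E) ∈ L) :
    ((Uᗮ : Set E) ∩ L) ∩ -((Vᗮ : Set E) ∩ L) = {0} := by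
  refine Set.Subset.antisymm (fun x ⟨⟨hxU, hxL⟩, hxV, _⟩ => ?_) ?_
  · have hx : x ∈ (U ⊔ V)ᗮ := by
      rw [← SetLike.mem_coe, ← coe_orthogonal_inter_neg_orthogonal]
      exact ⟨hxU, hxV⟩
    exact (U ⊔ V).inf_orthogonal_eq_bot.le ⟨hL hxL, hx⟩
  · rintro _ rfl
    exact ⟨⟨Uᗮ.zero_mem, h0⟩, by simp, by simpa using h0⟩

theorem orthogonal_inter_neg_orthogonal_ne_zero [FiniteDimensional ℝ E]
    (h : Module.finrank ℝ U + Module.finrank ℝ V < Module.finrank ℝ E) :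
    (Uᗮ : Set E) ∩ -(Vᗮ : Set E) ≠ {0} := by
  rw [coe_orthogonal_inter_neg_orthogonal, Ne, ← bot_coe (R := ℝ), SetLike.coe_set_eq,
    orthogonal_eq_bot_iff, ← Ne, ← lt_top_iff_ne_top]
  exact lt_top_of_finrank_lt_finrank ((finrank_add_le_finrank_add_finrank U V).trans_lt h)

theorem finrank_span_singleton_le_one (v : E) : Module.finrank ℝ (ℝ ∙ v) ≤ 1 := by
  simpa using finrank_span_le_card (R := ℝ) ({v} : Set E)

end Submodule

theorem two_lines_affine_hull_regular_not_strongly_regular_general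
    (a b : EuclideanSpace ℝ (Fin 3))
    (A B L : Set (EuclideanSpace ℝ (Fin 3)))
    (hA : A = (Submodule.span ℝ {a} : Submodule ℝ (EuclideanSpace ℝ (Fin 3))))
    (hB : B = (Submodule.span ℝ {b} : Submodule ℝ (EuclideanSpace ℝ (Fin 3))))
    (hL : L = ((affineSpan ℝ (A ∪ B) : AffineSubspace ℝ (EuclideanSpace ℝ (Fin 3))) : Set _)) :
    (limNormalCone A 0 ∩ (fun l => l - 0) '' L) ∩
        -(limNormalCone B 0 ∩ (fun l => l - 0) '' L) = {0} ∧
      limNormalCone A 0 ∩ -limNormalCone B 0 ≠ {0} := by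
  subst hA hB hL
  set U := ℝ ∙ a
  set V := ℝ ∙ b
  rw [U.limNormalCone_eq_orthogonal U.zero_mem, V.limNormalCone_eq_orthogonal V.zero_mem]
  simp only [sub_zero, Set.image_id']
  refine ⟨U.orthogonal_inter_neg_orthogonal_inter_eq_zero V
    (U.coe_affineSpan_union_subset_sup V) (subset_affineSpan ℝ _ (Or.inl U.zero_mem)), ?_⟩
  have hU : Module.finrank ℝ U ≤ 1 := Submodule.finrank_span_singleton_le_one a
  have hV : Module.finrank ℝ V ≤ 1 := Submodule.finrank_span_singleton_le_one b
  exact U.orthogonal_inter_neg_orthogonal_ne_zero V (by rw [finrank_euclideanSpace_fin]; omega)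

theorem two_lines_affine_hull_regular_not_strongly_regular
    (a b : EuclideanSpace ℝ (Fin 3)) (hab : LinearIndependent ℝ ![a, b])
    (A B L : Set (EuclideanSpace ℝ (Fin 3)))
    (hA : A = (Submodule.span ℝ {a} : Submodule ℝ (EuclideanSpace ℝ (Fin 3))))
    (hB : B = (Submodule.span ℝ {b} : Submodule ℝ (EuclideanSpace ℝ (Fin 3))))
    (hL : L = ((affineSpan ℝ (A ∪ B) : AffineSubspace ℝ (EuclideanSpace ℝ (Fin 3))) : Set _))
    (hAB : A ∩ B = {0}) :
    (limNormalCone A 0 ∩ (fun l => l - 0) '' L) ∩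
        -(limNormalCone B 0 ∩ (fun l => l - 0) '' L) = {0} ∧
      limNormalCone A 0 ∩ -limNormalCone B 0 ≠ {0} :=
  two_lines_affine_hull_regular_not_strongly_regular_general a b A B L hA hB hL
end
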